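/- arXiv:2105.06321 — 3 statements merged into one kernel-verified Lean document; each statement's English description precedes it below -/
import Mathlib

section
/- Let ν ∈ ℝ and n ≥ 1, and assume each coefficient of P_n(·,t) is a differentiable function of t on (0,∞). Then for every t > 0, d/dt [ b_n(t)/a_n(t) ] = (1/t)·( A_n(t)² + b_n(t)/a_n(t) ). -/
open MeasureTheory Set Filter Topology Polynomial Real

/-- limit at 0⁺ of x^μ e^{-c/x} -/
lemma aux_tendsto_zero (μ c : ℝ) (hc : 0 < c) :
    Tendsto (fun x : ℝ => x ^ μ * Real.exp (-(c / x))) (𝓝[>] (0:ℝ)) (𝓝 0) := by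
  have h1 : Tendsto (fun y : ℝ => y ^ (-μ) * Real.exp (-c * y)) atTop (𝓝 0) :=
    tendsto_rpow_mul_exp_neg_mul_atTop_nhds_zero (-μ) c hc
  have h2 : Tendsto (fun x : ℝ => x⁻¹) (𝓝[>] (0:ℝ)) atTop := tendsto_inv_nhdsGT_zero
  have h3 := h1.comp h2
  refine h3.congr' ?_
  filter_upwards [self_mem_nhdsWithin] with x (hx : 0 < x)
  simp only [Function.comp_apply]
  have e1 : -c * x⁻¹ = -(c / x) := by ring
  rw [e1, Real.inv_rpow hx.le, Real.rpow_neg hx.le, inv_inv]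

/-- limit at ∞ of x^μ e^{-ax - c/x}, a>0, c>0 -/
lemma aux_tendsto_top (μ a c : ℝ) (ha : 0 < a) (hc : 0 < c) :
    Tendsto (fun x : ℝ => x ^ μ * Real.exp (-(a*x) - c / x)) atTop (𝓝 0) := by
  have h1 : Tendsto (fun x : ℝ => x ^ μ * Real.exp (-a * x)) atTop (𝓝 0) :=
    tendsto_rpow_mul_exp_neg_mul_atTop_nhds_zero μ a ha
  refine tendsto_of_tendsto_of_tendsto_of_le_of_le' tendsto_const_nhds h1 ?_ ?_
  · filter_upwards [eventually_gt_atTop (0:ℝ)] with x hx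
    positivity
  · filter_upwards [eventually_gt_atTop (0:ℝ)] with x hx
    have : Real.exp (-(a*x) - c/x) ≤ Real.exp (-a*x) := by
      apply Real.exp_le_exp.2; nlinarith [div_pos hc hx]
    have h0 : (0:ℝ) ≤ x ^ μ := Real.rpow_nonneg (le_of_lt hx) μ
    nlinarith [Real.exp_pos (-(a*x) - c/x)]

/-- a continuous function on (0,∞) tending to 0 at both ends is bounded -/
lemma aux_exists_bound (g : ℝ → ℝ) (hcont : ContinuousOn g (Ioi 0))
    (h0 : Tendsto g (𝓝[>] (0:ℝ)) (𝓝 0)) (htop : Tendsto g atTop (𝓝 0)) :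
    ∃ C : ℝ, ∀ x ∈ Ioi (0:ℝ), |g x| ≤ C := by
  have e0 : ∀ᶠ x in 𝓝[>] (0:ℝ), |g x| < 1 := by
    have := Metric.tendsto_nhds.mp h0 1 one_pos
    simpa [Real.dist_eq] using this
  rw [eventually_iff, Metric.mem_nhdsWithin_iff] at e0
  obtain ⟨δ, hδ, hball⟩ := e0
  have etop : ∀ᶠ x in atTop, |g x| < 1 := by
    have := Metric.tendsto_nhds.mp htop 1 one_pos
    simpa [Real.dist_eq] using this
  obtain ⟨R, hR⟩ := eventually_atTop.mp etop
  have hK : IsCompact (Icc δ (max R δ)) := isCompact_Icc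
  have hKsub : Icc δ (max R δ) ⊆ Ioi 0 := fun x hx => lt_of_lt_of_le hδ hx.1
  obtain ⟨C0, hC0⟩ := hK.exists_bound_of_continuousOn (hcont.mono hKsub)
  refine ⟨max 1 C0, fun x hx => ?_⟩
  rcases lt_or_ge x δ with h | h
  · refine le_trans (le_of_lt ?_) (le_max_left _ _)
    have hb : x ∈ Metric.ball (0:ℝ) δ ∩ Ioi 0 := by
      constructor
      · simp [Real.dist_eq, abs_of_pos (mem_Ioi.mp hx), h]
      · exact hx
    exact hball hb
  rcases le_or_gt R x with h2 | h2
  · exact le_trans (le_of_lt (hR x h2)) (le_max_left _ _)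
  · have hx2 := hC0 x ⟨h, le_trans (le_of_lt h2) (le_max_left _ _)⟩
    exact le_trans (by simpa [Real.norm_eq_abs] using hx2) (le_max_right _ _)

lemma aux_contOn (μ c : ℝ) : ContinuousOn (fun x : ℝ => x ^ μ * Real.exp (-x - c / x)) (Ioi 0) := by
  apply ContinuousOn.mul
  · intro x hx
    exact (Real.continuousAt_rpow_const x μ (Or.inl (ne_of_gt (mem_Ioi.mp hx)))).continuousWithinAt
  · apply Real.continuous_exp.comp_continuousOn
    apply ContinuousOn.sub
    · exact continuous_neg.continuousOn
    · exact continuousOn_const.div continuousOn_id (fun x hx => ne_of_gt (mem_Ioi.mp hx))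

lemma aux_integrable (μ c : ℝ) (hc : 0 < c) :
    IntegrableOn (fun x : ℝ => x ^ μ * Real.exp (-x - c / x)) (Ioi 0) := by
  have lim0 : Tendsto (fun x : ℝ => x ^ μ * Real.exp (-((1/2)*x) - c / x)) (𝓝[>] (0:ℝ)) (𝓝 0) := by
    have h1 := aux_tendsto_zero μ c hc
    have h2 : Tendsto (fun x : ℝ => Real.exp (-((1/2)*x))) (𝓝[>] (0:ℝ)) (𝓝 1) := by
      have : Tendsto (fun x : ℝ => Real.exp (-((1/2)*x))) (𝓝 (0:ℝ)) (𝓝 1) := by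
        have := (Real.continuous_exp.comp (by continuity : Continuous fun x : ℝ => -((1/2)*x))).tendsto 0
        simpa [Function.comp_def] using this
      exact this.mono_left nhdsWithin_le_nhds
    have h3 := h1.mul h2
    rw [zero_mul] at h3
    refine h3.congr (fun x => ?_)
    rw [mul_assoc, ← Real.exp_add]
    ring_nf
  have limtop : Tendsto (fun x : ℝ => x ^ μ * Real.exp (-((1/2)*x) - c / x)) atTop (𝓝 0) :=
    aux_tendsto_top μ (1/2) c (by norm_num) hc
  have hcont2 : ContinuousOn (fun x : ℝ => x ^ μ * Real.exp (-((1/2)*x) - c / x)) (Ioi 0) := by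
    apply ContinuousOn.mul
    · intro x hx
      exact (Real.continuousAt_rpow_const x μ (Or.inl (ne_of_gt (mem_Ioi.mp hx)))).continuousWithinAt
    · apply Real.continuous_exp.comp_continuousOn
      apply ContinuousOn.sub
      · exact (by continuity : Continuous fun x : ℝ => -((1/2)*x)).continuousOn
      · exact continuousOn_const.div continuousOn_id (fun x hx => ne_of_gt (mem_Ioi.mp hx))
  obtain ⟨C, hC⟩ := aux_exists_bound _ hcont2 lim0 limtop
  have hig : IntegrableOn (fun x : ℝ => C * Real.exp (-(1/2) * x)) (Ioi 0) :=
    (exp_neg_integrableOn_Ioi 0 (by norm_num : (0:ℝ) < 1/2)).const_mul C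
  apply Integrable.mono' hig ((aux_contOn μ c).aestronglyMeasurable measurableSet_Ioi)
  rw [ae_restrict_iff' measurableSet_Ioi]
  filter_upwards with x hx
  have hx0 : 0 < x := mem_Ioi.mp hx
  have hnn : (0:ℝ) ≤ x ^ μ * Real.exp (-x - c / x) := by positivity
  rw [Real.norm_eq_abs, abs_of_nonneg hnn]
  have key : x ^ μ * Real.exp (-x - c / x)
      = (x ^ μ * Real.exp (-((1/2)*x) - c / x)) * Real.exp (-(1/2) * x) := by
    rw [mul_assoc, ← Real.exp_add]
    ring_nf
  rw [key]
  have h1 : x ^ μ * Real.exp (-((1/2)*x) - c / x) ≤ C := le_trans (le_abs_self _) (hC x hx)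
  exact mul_le_mul_of_nonneg_right h1 (Real.exp_pos _).le

/-- FTC on (0,∞) with vanishing limits at both ends -/
lemma aux_integral_deriv_zero (F F' : ℝ → ℝ)
    (hd : ∀ x ∈ Ioi (0:ℝ), HasDerivAt F (F' x) x)
    (hint : IntegrableOn F' (Ioi 0))
    (h0 : Tendsto F (𝓝[>] (0:ℝ)) (𝓝 0))
    (htop : Tendsto F atTop (𝓝 0)) :
    ∫ x in Ioi (0:ℝ), F' x = 0 := by
  have key : ∀ ε : ℝ, 0 < ε → ∫ x in Ioi ε, F' x = - F ε := by
    intro ε hε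
    have h := integral_Ioi_of_hasDerivAt_of_tendsto
      (f := F) (f' := F') (a := ε) (m := 0)
      (hd ε (mem_Ioi.mpr hε)).continuousAt.continuousWithinAt
      (fun x hx => hd x (mem_Ioi.mpr (lt_trans hε (mem_Ioi.mp hx))))
      (hint.mono_set (Ioi_subset_Ioi hε.le)) htop
    rw [h]; ring
  have hmeas : ∀ᶠ (ε : ℝ) in 𝓝[>] (0:ℝ),
      AEStronglyMeasurable (Set.indicator (Ioc (0:ℝ) ε) F') (volume.restrict (Ioi 0)) := by
    filter_upwards with ε
    exact hint.aestronglyMeasurable.indicator measurableSet_Ioc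
  have hbdd : ∀ᶠ (ε : ℝ) in 𝓝[>] (0:ℝ), ∀ᵐ x ∂(volume.restrict (Ioi (0:ℝ))),
      ‖Set.indicator (Ioc (0:ℝ) ε) F' x‖ ≤ ‖F' x‖ := by
    filter_upwards with ε
    filter_upwards with x
    exact norm_indicator_le_norm_self F' x
  have hptwise : ∀ᵐ x ∂(volume.restrict (Ioi (0:ℝ))),
      Tendsto (fun ε : ℝ => Set.indicator (Ioc (0:ℝ) ε) F' x) (𝓝[>] (0:ℝ)) (𝓝 0) := by
    rw [ae_restrict_iff' measurableSet_Ioi]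
    filter_upwards with x hx
    have hx0 : 0 < x := mem_Ioi.mp hx
    have hev : ∀ᶠ ε in 𝓝[>] (0:ℝ), Set.indicator (Ioc (0:ℝ) ε) F' x = 0 := by
      filter_upwards [Ioo_mem_nhdsGT_of_mem (⟨le_refl 0, hx0⟩ : (0:ℝ) ∈ Ico 0 x)] with ε hε
      exact Set.indicator_of_notMem (fun hmem => absurd hmem.2 (not_le.mpr hε.2)) F'
    exact Tendsto.congr' (hev.mono fun ε h => h.symm) tendsto_const_nhds
  have hmain := tendsto_integral_filter_of_dominated_convergence
    (μ := volume.restrict (Ioi (0:ℝ))) (l := 𝓝[>] (0:ℝ))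
    (F := fun (ε : ℝ) (x : ℝ) => Set.indicator (Ioc (0:ℝ) ε) F' x)
    (f := fun _ => (0:ℝ)) (fun x => ‖F' x‖) hmeas hbdd hint.norm hptwise
  simp only [integral_zero] at hmain
  have hsmall : Tendsto (fun ε : ℝ => ∫ x in Ioc (0:ℝ) ε, F' x) (𝓝[>] (0:ℝ)) (𝓝 0) := by
    refine hmain.congr (fun ε => ?_)
    rw [integral_indicator measurableSet_Ioc, Measure.restrict_restrict measurableSet_Ioc,
      Set.inter_eq_left.mpr Ioc_subset_Ioi_self]
  have hsplit : ∀ ε : ℝ, 0 < ε →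
      (∫ x in Ioi (0:ℝ), F' x) = (∫ x in Ioc (0:ℝ) ε, F' x) + ∫ x in Ioi ε, F' x := by
    intro ε hε
    rw [← setIntegral_union (Set.Ioc_disjoint_Ioi le_rfl) measurableSet_Ioi
      (hint.mono_set Ioc_subset_Ioi_self) (hint.mono_set (Ioi_subset_Ioi hε.le)),
      Ioc_union_Ioi_eq_Ioi hε.le]
  have h1 : Tendsto (fun ε : ℝ => ∫ x in Ioi ε, F' x) (𝓝[>] (0:ℝ))
      (𝓝 (∫ x in Ioi (0:ℝ), F' x)) := by
    have h := (tendsto_const_nhds (x := ∫ x in Ioi (0:ℝ), F' x)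
      (f := 𝓝[>] (0:ℝ))).sub hsmall
    rw [sub_zero] at h
    refine h.congr' ?_
    filter_upwards [self_mem_nhdsWithin] with ε (hε : 0 < ε)
    rw [hsplit ε hε]; ring
  have h2 : Tendsto (fun ε : ℝ => ∫ x in Ioi ε, F' x) (𝓝[>] (0:ℝ)) (𝓝 0) := by
    have h := h0.neg
    rw [neg_zero] at h
    refine h.congr' ?_
    filter_upwards [self_mem_nhdsWithin] with ε (hε : 0 < ε)
    exact (key ε hε).symm
  exact tendsto_nhds_unique h1 h2

lemma aux_tendsto_zero' (μ c : ℝ) (hc : 0 < c) :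
    Tendsto (fun x : ℝ => x ^ μ * Real.exp (-x - c / x)) (𝓝[>] (0:ℝ)) (𝓝 0) := by
  have h1 := aux_tendsto_zero μ c hc
  have h2 : Tendsto (fun x : ℝ => Real.exp (-x)) (𝓝[>] (0:ℝ)) (𝓝 1) := by
    have : Tendsto (fun x : ℝ => Real.exp (-x)) (𝓝 (0:ℝ)) (𝓝 1) := by
      have := (Real.continuous_exp.comp continuous_neg).tendsto 0
      simpa [Function.comp_def] using this
    exact this.mono_left nhdsWithin_le_nhds
  have h3 := h1.mul h2
  rw [zero_mul] at h3
  refine h3.congr (fun x => ?_)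
  rw [mul_assoc, ← Real.exp_add]
  ring_nf

lemma aux_tendsto_top' (μ c : ℝ) (hc : 0 < c) :
    Tendsto (fun x : ℝ => x ^ μ * Real.exp (-x - c / x)) atTop (𝓝 0) := by
  have := aux_tendsto_top μ 1 c one_pos hc
  simpa using this

noncomputable def Mo (μ s : ℝ) : ℝ := ∫ x in Ioi (0:ℝ), x ^ μ * Real.exp (-x - s / x)

lemma hasDerivAt_Mo (μ : ℝ) {s : ℝ} (hs : 0 < s) :
    HasDerivAt (fun σ => Mo μ σ) (-(Mo (μ-1) s)) s := by
  have hres := hasDerivAt_integral_of_dominated_loc_of_deriv_le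
    (μ := volume.restrict (Ioi (0:ℝ))) (x₀ := s) (s := Metric.ball s (s/2))
    (F := fun (σ : ℝ) (x : ℝ) => x ^ μ * Real.exp (-x - σ / x))
    (F' := fun (σ : ℝ) (x : ℝ) => -(x ^ (μ-1) * Real.exp (-x - σ / x)))
    (bound := fun x => x ^ (μ-1) * Real.exp (-x - (s/2) / x))
    (Metric.ball_mem_nhds s (half_pos hs))
    (by
      filter_upwards with σ
      exact (aux_contOn μ σ).aestronglyMeasurable measurableSet_Ioi)
    (aux_integrable μ s hs)
    (((aux_contOn (μ-1) s).aestronglyMeasurable measurableSet_Ioi).neg)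
    (by
      rw [ae_restrict_iff' measurableSet_Ioi]
      filter_upwards with x hx
      intro σ hσ
      have hx0 : 0 < x := mem_Ioi.mp hx
      have hσ2 : s/2 ≤ σ := by
        have := abs_lt.mp (by simpa [Real.dist_eq] using hσ)
        linarith [this.1]
      have hnn : (0:ℝ) ≤ x ^ (μ-1) * Real.exp (-x - σ / x) := by positivity
      rw [norm_neg, Real.norm_eq_abs, abs_of_nonneg hnn]
      apply mul_le_mul_of_nonneg_left _ (Real.rpow_nonneg hx0.le _)
      apply Real.exp_le_exp.2
      have hdd : s/2/x ≤ σ/x := by gcongr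
      linarith)
    (aux_integrable (μ-1) (s/2) (half_pos hs))
    (by
      rw [ae_restrict_iff' measurableSet_Ioi]
      filter_upwards with x hx
      intro σ hσ
      have hx0 : 0 < x := mem_Ioi.mp hx
      have hin : HasDerivAt (fun σ' : ℝ => -x - σ' / x) (-(1/x)) σ := by
        have h := (((hasDerivAt_id σ).div_const x).neg.const_add (-x))
        simpa [sub_eq_add_neg] using h
      have hexp := hin.exp
      have h := hexp.const_mul (x ^ μ)
      exact h.congr_deriv (by rw [Real.rpow_sub hx0, Real.rpow_one]; field_simp))
  have heq : (∫ x in Ioi (0:ℝ), -(x ^ (μ-1) * Real.exp (-x - s / x))) = -(Mo (μ-1) s) := by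
    rw [integral_neg]; rfl
  rw [heq] at hres
  exact hres.2

lemma Mo_ibp (μ : ℝ) {s : ℝ} (hs : 0 < s) :
    Mo (μ+1) s = (μ+1) * Mo μ s + s * Mo (μ-1) s := by
  set F : ℝ → ℝ := fun x => x ^ (μ+1) * Real.exp (-x - s / x) with hF
  set F' : ℝ → ℝ := fun x => (μ+1) * (x ^ μ * Real.exp (-x - s / x))
      - x ^ (μ+1) * Real.exp (-x - s / x) + s * (x ^ (μ-1) * Real.exp (-x - s / x)) with hF'
  have hI1 := aux_integrable μ s hs
  have hI2 := aux_integrable (μ+1) s hs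
  have hI3 := aux_integrable (μ-1) s hs
  have hint : IntegrableOn F' (Ioi 0) := ((hI1.const_mul (μ+1)).sub hI2).add (hI3.const_mul s)
  have hd : ∀ x ∈ Ioi (0:ℝ), HasDerivAt F (F' x) x := by
    intro x hx
    have hx0 : 0 < x := mem_Ioi.mp hx
    have h1 : HasDerivAt (fun x : ℝ => x ^ (μ+1)) ((μ+1) * x ^ μ) x := by
      have := Real.hasDerivAt_rpow_const (x := x) (p := μ+1) (Or.inl hx0.ne')
      simpa using this
    have hin : HasDerivAt (fun x : ℝ => -x - s / x) (-1 + s / x^2) x := by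
      have h := ((hasDerivAt_id x).neg).sub ((hasDerivAt_inv hx0.ne').const_mul s)
      have e : -(1:ℝ) - s * -(x^2)⁻¹ = -1 + s / x^2 := by field_simp; ring
      rw [e] at h
      refine h.congr_of_eventuallyEq ?_
      filter_upwards with y
      simp [div_eq_mul_inv]
    have hexp := hin.exp
    have h := h1.mul hexp
    refine HasDerivAt.congr_deriv h ?_
    have e2 : x ^ (μ+1) * (s / x^2) = s * x ^ (μ-1) := by
      have : x ^ (μ-1) = x ^ (μ+1) / x ^ (2:ℝ) := by
        rw [← Real.rpow_sub hx0]; congr 1; ring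
      rw [this, Real.rpow_two]
      field_simp
    have e3 : x ^ (μ+1) * (Real.exp (-x - s/x) * (-1 + s / x^2))
        = - (x ^ (μ+1) * Real.exp (-x - s/x)) + (x ^ (μ+1) * (s / x^2)) * Real.exp (-x - s/x) := by
      ring
    rw [hF']
    rw [e3, e2]
    ring
  have h0 : Tendsto F (𝓝[>] (0:ℝ)) (𝓝 0) := aux_tendsto_zero' (μ+1) s hs
  have htop : Tendsto F atTop (𝓝 0) := aux_tendsto_top' (μ+1) s hs
  have hzero := aux_integral_deriv_zero F F' hd hint h0 htop
  have hsplit : (∫ x in Ioi (0:ℝ), F' x)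
      = (μ+1) * Mo μ s - Mo (μ+1) s + s * Mo (μ-1) s := by
    have e1 : (∫ x in Ioi (0:ℝ), F' x) = (∫ x in Ioi (0:ℝ),
        (((μ+1) * (x ^ μ * Real.exp (-x - s/x)) - x ^ (μ+1) * Real.exp (-x - s/x))
          + s * (x ^ (μ-1) * Real.exp (-x - s/x)))) := rfl
    have hfg : Integrable (fun x : ℝ => (μ+1) * (x ^ μ * Real.exp (-x - s/x))
        - x ^ (μ+1) * Real.exp (-x - s/x)) (volume.restrict (Ioi 0)) :=
      (hI1.const_mul (μ+1)).sub hI2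
    rw [e1, integral_add hfg (hI3.const_mul s),
      integral_sub (hI1.const_mul (μ+1)) hI2, integral_const_mul, integral_const_mul]
    rfl
  rw [hsplit] at hzero
  linarith

noncomputable def Iw (ν : ℝ) (q : Polynomial ℝ) (s : ℝ) : ℝ :=
  ∫ x in Ioi (0:ℝ), q.eval x * (x ^ ν * Real.exp (-x - s / x))

lemma Iw_integrable (ν : ℝ) (q : Polynomial ℝ) {s : ℝ} (hs : 0 < s) :
    IntegrableOn (fun x => q.eval x * (x ^ ν * Real.exp (-x - s / x))) (Ioi 0) := by
  induction q using Polynomial.induction_on' with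
  | add p q hp hq =>
    simp only [Polynomial.eval_add, add_mul]
    exact hp.add hq
  | monomial j c =>
    simp only [Polynomial.eval_monomial]
    have base := (aux_integrable (ν + j) s hs).const_mul c
    refine IntegrableOn.congr_fun base (fun x hx => ?_) measurableSet_Ioi
    have hx0 : 0 < x := mem_Ioi.mp hx
    rw [Real.rpow_add hx0, Real.rpow_natCast]
    ring

lemma Iw_zero (ν s : ℝ) : Iw ν 0 s = 0 := by simp [Iw]

lemma Iw_add (ν : ℝ) (p q : Polynomial ℝ) {s : ℝ} (hs : 0 < s) :
    Iw ν (p + q) s = Iw ν p s + Iw ν q s := by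
  unfold Iw
  simp only [Polynomial.eval_add, add_mul]
  exact integral_add (Iw_integrable ν p hs) (Iw_integrable ν q hs)

lemma Iw_Cmul (ν c : ℝ) (q : Polynomial ℝ) (s : ℝ) :
    Iw ν (Polynomial.C c * q) s = c * Iw ν q s := by
  unfold Iw
  simp only [Polynomial.eval_mul, Polynomial.eval_C, mul_assoc]
  exact integral_const_mul c _

lemma Iw_monomial (ν : ℝ) (j : ℕ) (c : ℝ) (s : ℝ) :
    Iw ν (Polynomial.monomial j c) s = c * Mo (ν + j) s := by
  unfold Iw Mo
  rw [← integral_const_mul]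
  refine setIntegral_congr_fun measurableSet_Ioi (fun x hx => ?_)
  have hx0 : 0 < x := mem_Ioi.mp hx
  rw [Polynomial.eval_monomial, Real.rpow_add hx0, Real.rpow_natCast]
  ring

lemma Iw_sum (ν : ℝ) {ι : Type*} (u : Finset ι) (f : ι → Polynomial ℝ) {s : ℝ} (hs : 0 < s) :
    Iw ν (∑ i ∈ u, f i) s = ∑ i ∈ u, Iw ν (f i) s := by
  classical
  induction u using Finset.induction_on with
  | empty => simp [Iw_zero]
  | insert _ _ hnotmem ih =>
    rw [Finset.sum_insert hnotmem, Finset.sum_insert hnotmem, Iw_add ν _ _ hs, ih]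

lemma Iw_Xk_mul (ν : ℝ) (k : ℕ) (q : Polynomial ℝ) {s : ℝ} (hs : 0 < s) :
    Iw ν ((Polynomial.X : Polynomial ℝ) ^ k * q) s
      = q.sum (fun j c => c * Mo (ν + (k + j)) s) := by
  induction q using Polynomial.induction_on' with
  | add p q hp hq =>
    rw [mul_add, Iw_add ν _ _ hs, hp, hq]
    rw [Polynomial.sum_add_index p q _ (fun j => by simp) (fun j b₁ b₂ => by ring)]
  | monomial j c =>
    rw [Polynomial.X_pow_eq_monomial, Polynomial.monomial_mul_monomial, one_mul,
      Iw_monomial]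
    rw [Polynomial.sum_monomial_index c _ (by simp)]
    push_cast
    ring_nf

lemma Iw_ibp (ν : ℝ) (p : Polynomial ℝ) {s : ℝ} (hs : 0 < s) :
    s * Iw (ν-1) p s = Iw ν (Polynomial.X * p) s
      - Iw ν (Polynomial.X * p.derivative) s - (ν+1) * Iw ν p s := by
  induction p using Polynomial.induction_on' with
  | add p q hp hq =>
    rw [mul_add, Polynomial.derivative_add, mul_add, Iw_add ν _ _ hs, Iw_add ν _ _ hs,
      Iw_add ν _ _ hs, Iw_add (ν-1) _ _ hs]
    ring_nf
    ring_nf at hp hq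
    linarith
  | monomial j c =>
    rcases j with _ | j
    · simp only [Polynomial.derivative_monomial, Nat.cast_zero, mul_zero,
        Polynomial.monomial_zero_right, Polynomial.X_mul_monomial,
        Iw_monomial, Iw_zero, MulZeroClass.mul_zero]
      have h := Mo_ibp ν hs
      push_cast
      ring_nf
      ring_nf at h
      linear_combination (-c) * h
    · simp only [Polynomial.derivative_monomial, Polynomial.X_mul_monomial, Iw_monomial]
      have h := Mo_ibp (ν + (j+1)) hs
      push_cast
      ring_nf
      ring_nf at h
      linear_combination (-c) * h


open Finset in
theorem stmt_8
    (ν : ℝ)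
    (P : ℕ → ℝ → Polynomial ℝ)
    (a b A B : ℕ → ℝ → ℝ)
    (hdeg : ∀ n : ℕ, ∀ t : ℝ, 0 < t → (P n t).degree = (n : ℕ))
    (ha : ∀ n : ℕ, ∀ t : ℝ, 0 < t → a n t = (P n t).coeff n)
    (han : ∀ n : ℕ, ∀ t : ℝ, 0 < t → a n t ≠ 0)
    (hbs : ∀ n : ℕ, ∀ t : ℝ, 0 < t → b (n + 1) t = (P (n + 1) t).coeff n)
    (hb0 : ∀ t : ℝ, 0 < t → b 0 t = 0)
    (horth : ∀ n m : ℕ, ∀ t : ℝ, 0 < t →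
      (∫ x in Set.Ioi (0 : ℝ),
        (P n t).eval x * (P m t).eval x * (x ^ ν * Real.exp (-x - t / x)))
        = if n = m then 1 else 0)
    (hA0 : ∀ t : ℝ, 0 < t → A 0 t = 0)
    (hA : ∀ n : ℕ, ∀ t : ℝ, 0 < t → A (n + 1) t = a n t / a (n + 1) t)
    (hB : ∀ n : ℕ, ∀ t : ℝ, 0 < t → B n t = b n t / a n t - b (n + 1) t / a (n + 1) t)
    (n : ℕ) (hn : 1 ≤ n)
    (hdiff : ∀ k : ℕ, DifferentiableOn ℝ (fun s => (P n s).coeff k) (Set.Ioi 0))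
    (t : ℝ) (ht : 0 < t) :
    deriv (fun s => b n s / a n s) t = (1 / t) * ((A n t) ^ 2 + b n t / a n t) := by
  obtain ⟨m, rfl⟩ : ∃ m, n = m + 1 := ⟨n - 1, (Nat.succ_pred_eq_of_pos hn).symm⟩
  -- basic coefficient vanishing
  have hcoeffP : ∀ (k : ℕ) (s : ℝ), 0 < s → ∀ j, k < j → (P k s).coeff j = 0 := by
    intro k s hs j hj
    refine Polynomial.coeff_eq_zero_of_degree_lt ?_
    rw [hdeg k s hs]
    exact_mod_cast hj
  have horth' : ∀ (k l : ℕ) (s : ℝ), 0 < s →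
      Iw ν (P k s * P l s) s = if k = l then 1 else 0 := by
    intro k l s hs
    rw [← horth k l s hs]
    unfold Iw
    simp only [Polynomial.eval_mul]
  -- orthogonality to lower-degree polynomials
  have Okey : ∀ (s : ℝ), 0 < s → ∀ (d : ℕ), ∀ (k : ℕ) (q : Polynomial ℝ),
      (∀ j, d < j → q.coeff j = 0) → (∀ j, k ≤ j → q.coeff j = 0) →
      Iw ν (q * P k s) s = 0 := by
    intro s hs d
    induction d with
    | zero =>
      intro k q h1 h2
      rcases Nat.eq_zero_or_pos k with rfl | hk
      · have hq0 : q = 0 := by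
          ext j
          rcases Nat.eq_zero_or_pos j with rfl | hj
          · simpa using h2 0 le_rfl
          · simpa using h1 j hj
        rw [hq0, zero_mul, Iw_zero]
      · have hq : q = Polynomial.C (q.coeff 0) := by
          ext j
          rcases Nat.eq_zero_or_pos j with rfl | hj
          · simp
          · rw [h1 j hj, Polynomial.coeff_C, if_neg hj.ne']
        have hP0 : P 0 s = Polynomial.C (a 0 s) := by
          have hd0 : (P 0 s).degree ≤ 0 := le_of_eq (by simpa using hdeg 0 s hs)
          rw [Polynomial.eq_C_of_degree_le_zero hd0, ha 0 s hs]
        have key : q * P k s = Polynomial.C (q.coeff 0 / a 0 s) * (P 0 s * P k s) := by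
          rw [hP0, ← mul_assoc, ← Polynomial.C_mul,
            div_mul_cancel₀ _ (han 0 s hs)]
          exact congrArg (· * P k s) hq
        rw [key, Iw_Cmul, horth' 0 k s hs, if_neg (Nat.ne_of_lt hk), mul_zero]
    | succ d ih =>
      intro k q h1 h2
      by_cases hk : k ≤ d + 1
      · exact ih k q (fun j hj => h2 j (le_trans hk hj)) h2
      · push_neg at hk
        set c := q.coeff (d+1) / a (d+1) s with hc_def
        set q' := q - Polynomial.C c * P (d+1) s with hq'_def
        have hPd : (P (d+1) s).coeff (d+1) = a (d+1) s := (ha (d+1) s hs).symm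
        have h1' : ∀ j, d < j → q'.coeff j = 0 := by
          intro j hj
          rcases eq_or_lt_of_le (Nat.succ_le_of_lt hj) with hje | hjl
          · rw [hq'_def]
            simp only [Polynomial.coeff_sub, Polynomial.coeff_C_mul]
            rw [← hje, hPd, hc_def, div_mul_cancel₀ _ (han (d+1) s hs), sub_self]
          · rw [hq'_def]
            simp only [Polynomial.coeff_sub, Polynomial.coeff_C_mul]
            rw [h1 j hjl, hcoeffP (d+1) s hs j hjl, mul_zero, sub_zero]
        have h2' : ∀ j, k ≤ j → q'.coeff j = 0 := by
          intro j hj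
          rw [hq'_def]
          simp only [Polynomial.coeff_sub, Polynomial.coeff_C_mul]
          rw [h2 j hj, hcoeffP (d+1) s hs j (lt_of_lt_of_le hk hj), mul_zero, sub_zero]
        have hsplit : q * P k s = q' * P k s
            + Polynomial.C c * (P (d+1) s * P k s) := by
          rw [hq'_def]; ring
        rw [hsplit, Iw_add ν _ _ hs, Iw_Cmul, horth' (d+1) k s hs,
          if_neg (Nat.ne_of_lt hk), mul_zero, add_zero]
        exact ih k q' h1' h2'
  have Oeval : ∀ (s : ℝ), 0 < s → ∀ (k : ℕ) (q : Polynomial ℝ),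
      (∀ j, k < j → q.coeff j = 0) → Iw ν (q * P k s) s = q.coeff k / a k s := by
    intro s hs k q h1
    set c := q.coeff k / a k s with hc_def
    set q' := q - Polynomial.C c * P k s with hq'_def
    have h1' : ∀ j, k < j → q'.coeff j = 0 := by
      intro j hj
      rw [hq'_def]
      simp only [Polynomial.coeff_sub, Polynomial.coeff_C_mul]
      rw [h1 j hj, hcoeffP k s hs j hj, mul_zero, sub_zero]
    have h2' : ∀ j, k ≤ j → q'.coeff j = 0 := by
      intro j hj
      rcases eq_or_lt_of_le hj with hje | hjl
      · rw [hq'_def]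
        simp only [Polynomial.coeff_sub, Polynomial.coeff_C_mul]
        rw [← hje, ← ha k s hs, hc_def, div_mul_cancel₀ _ (han k s hs), sub_self]
      · exact h1' j hjl
    have hsplit : q * P k s = q' * P k s + Polynomial.C c * (P k s * P k s) := by
      rw [hq'_def]; ring
    rw [hsplit, Iw_add ν _ _ hs, Iw_Cmul, horth' k k s hs, if_pos rfl, mul_one,
      Okey s hs k k q' (fun j hj => h2' j hj.le) h2', zero_add]
  have Oeval2 : ∀ (s : ℝ), 0 < s → ∀ (k : ℕ) (q : Polynomial ℝ),
      (∀ j, k + 1 < j → q.coeff j = 0) →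
      Iw ν (q * P k s) s = (q.coeff k - q.coeff (k+1) * b (k+1) s / a (k+1) s) / a k s := by
    intro s hs k q h1
    set c := q.coeff (k+1) / a (k+1) s with hc_def
    set q' := q - Polynomial.C c * P (k+1) s with hq'_def
    have h1' : ∀ j, k < j → q'.coeff j = 0 := by
      intro j hj
      rcases eq_or_lt_of_le (Nat.succ_le_of_lt hj) with hje | hjl
      · rw [hq'_def]
        simp only [Polynomial.coeff_sub, Polynomial.coeff_C_mul]
        rw [← hje, ← ha (k+1) s hs, hc_def, div_mul_cancel₀ _ (han (k+1) s hs), sub_self]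
      · rw [hq'_def]
        simp only [Polynomial.coeff_sub, Polynomial.coeff_C_mul]
        rw [h1 j hjl, hcoeffP (k+1) s hs j hjl, mul_zero, sub_zero]
    have hsplit : q * P k s = q' * P k s + Polynomial.C c * (P (k+1) s * P k s) := by
      rw [hq'_def]; ring
    rw [hsplit, Iw_add ν _ _ hs, Iw_Cmul, horth' (k+1) k s hs,
      if_neg (by omega), mul_zero, add_zero, Oeval s hs k q' h1']
    rw [hq'_def]
    simp only [Polynomial.coeff_sub, Polynomial.coeff_C_mul]
    rw [← hbs k s hs, hc_def]
    ring_nf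
  -- data
  set aN := a (m+1) t with haN_def
  set aM := a m t with haM_def
  set bN := b (m+1) t with hbN_def
  have haN : aN ≠ 0 := han (m+1) t ht
  have haM : aM ≠ 0 := han m t ht
  have ht' : t ≠ 0 := ne_of_gt ht
  set r := Iw (ν-1) (P (m+1) t * P m t) t with hr_def
  -- integration by parts identity
  have hibp : t * r = aM / aN + bN / aM := by
    have h := Iw_ibp ν (P (m+1) t * P m t) ht
    -- term E0
    have E0 : Iw ν (P (m+1) t * P m t) t = 0 := by
      rw [horth' (m+1) m t ht, if_neg (by omega)]
    -- term E1
    have E1 : Iw ν (Polynomial.X * (P (m+1) t * P m t)) t = aM / aN := by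
      have e : Polynomial.X * (P (m+1) t * P m t)
          = (Polynomial.X * P m t) * P (m+1) t := by ring
      rw [e, Oeval t ht (m+1) _ ?_, Polynomial.coeff_X_mul, ← ha m t ht]
      intro j hj
      rcases Nat.exists_eq_succ_of_ne_zero (by omega : j ≠ 0) with ⟨jj, rfl⟩
      rw [Polynomial.coeff_X_mul]
      exact hcoeffP m t ht jj (by omega)
    -- term E2
    have hder : (P (m+1) t * P m t).derivative
        = (P (m+1) t).derivative * P m t + P (m+1) t * (P m t).derivative :=
      Polynomial.derivative_mul
    have E2a : Iw ν (Polynomial.X * ((P (m+1) t).derivative * P m t)) t = -bN / aM := by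
      have e : Polynomial.X * ((P (m+1) t).derivative * P m t)
          = (Polynomial.X * (P (m+1) t).derivative) * P m t := by ring
      have hcoeffs : ∀ j, m + 1 < j
          → (Polynomial.X * (P (m+1) t).derivative).coeff j = 0 := by
        intro j hj
        rcases Nat.exists_eq_succ_of_ne_zero (by omega : j ≠ 0) with ⟨jj, rfl⟩
        rw [Polynomial.coeff_X_mul, Polynomial.coeff_derivative,
          hcoeffP (m+1) t ht (jj+1) (by omega), zero_mul]
      rw [e, Oeval2 t ht m _ hcoeffs]
      have hc1 : (Polynomial.X * (P (m+1) t).derivative).coeff (m+1)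
          = aN * (m+1 : ℕ) := by
        rw [Polynomial.coeff_X_mul, Polynomial.coeff_derivative, ← ha (m+1) t ht]
        push_cast; ring
      have hc2 : (Polynomial.X * (P (m+1) t).derivative).coeff m
          = bN * (m : ℕ) := by
        rcases Nat.eq_zero_or_pos m with rfl | hm
        · rw [Polynomial.X_mul, Polynomial.coeff_mul_X_zero]
          simp
        · rcases Nat.exists_eq_succ_of_ne_zero (Nat.pos_iff_ne_zero.mp hm) with ⟨mm, rfl⟩
          rw [Polynomial.coeff_X_mul, Polynomial.coeff_derivative, ← hbs (mm+1) t ht]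
          push_cast; ring
      rw [hc1, hc2, ← haN_def, ← haM_def, ← hbN_def]
      field_simp
      push_cast
      ring
    have E2b : Iw ν (Polynomial.X * (P (m+1) t * (P m t).derivative)) t = 0 := by
      have e : Polynomial.X * (P (m+1) t * (P m t).derivative)
          = (Polynomial.X * (P m t).derivative) * P (m+1) t := by ring
      have hcoeffs : ∀ j, m < j → (Polynomial.X * (P m t).derivative).coeff j = 0 := by
        intro j hj
        rcases Nat.exists_eq_succ_of_ne_zero (by omega : j ≠ 0) with ⟨jj, rfl⟩
        rw [Polynomial.coeff_X_mul, Polynomial.coeff_derivative,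
          hcoeffP m t ht (jj+1) (by omega), zero_mul]
      rw [e]
      exact Okey t ht m (m+1) _ hcoeffs (fun j hj => hcoeffs j (by omega))
    have hsum : Iw ν (Polynomial.X * (P (m+1) t * P m t).derivative) t = -bN / aM := by
      rw [hder, mul_add, Iw_add ν _ _ ht, E2a, E2b, add_zero]
    rw [E0, E1, hsum] at h
    rw [← hr_def] at h
    rw [h]
    field_simp
    ring
  -- differentiating orthogonality in t
  have hr2 : r = (deriv (fun s => (P (m+1) s).coeff m) t
      - deriv (fun s => (P (m+1) s).coeff (m+1)) t * bN / aN) / aM := by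
    set Q := P m t with hQ_def
    have hQc : ∀ j, m < j → Q.coeff j = 0 := hcoeffP m t ht
    set ck' : ℕ → ℝ := fun k => deriv (fun s => (P (m+1) s).coeff k) t with hck'_def
    have hck : ∀ k, HasDerivAt (fun s => (P (m+1) s).coeff k) (ck' k) t := fun k =>
      ((hdiff k).differentiableAt (Ioi_mem_nhds ht)).hasDerivAt
    set G : ℕ → ℝ → ℝ := fun k s => Q.sum (fun j c => c * Mo (ν + (k+j)) s) with hG_def
    have hGq : ∀ (k : ℕ) (s : ℝ), 0 < s → G k s = Iw ν (Polynomial.X ^ k * Q) s :=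
      fun k s hs => (Iw_Xk_mul ν k Q hs).symm
    have hGd : ∀ k, HasDerivAt (G k)
        (Q.sum fun j c => c * -(Mo ((ν-1) + (k+j)) t)) t := by
      intro k
      rw [hG_def]
      simp only [Polynomial.sum_def]
      refine HasDerivAt.fun_sum (fun j _ => ?_)
      have hM := hasDerivAt_Mo (ν + (k+j)) ht
      have e : (ν + (k+j):ℝ) - 1 = (ν-1) + (k+j) := by ring
      rw [e] at hM
      exact hM.const_mul (Q.coeff j)
    set F : ℝ → ℝ := fun s => ∑ k ∈ Finset.range (m+2), (P (m+1) s).coeff k * G k s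
      with hF_def
    have hPsum : ∀ (s : ℝ), 0 < s → P (m+1) s
        = ∑ k ∈ Finset.range (m+2), Polynomial.monomial k ((P (m+1) s).coeff k) :=
      fun s hs => Polynomial.as_sum_range' _ _
        (by rw [Polynomial.natDegree_eq_of_degree_eq_some (hdeg (m+1) s hs)]; omega)
    have hprod : ∀ (ν' : ℝ) (s : ℝ), 0 < s → ∀ (cf : ℕ → ℝ),
        Iw ν' ((∑ k ∈ Finset.range (m+2), Polynomial.monomial k (cf k)) * Q) s
          = ∑ k ∈ Finset.range (m+2), cf k * Iw ν' (Polynomial.X ^ k * Q) s := by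
      intro ν' s hs cf
      rw [Finset.sum_mul, Iw_sum ν' _ _ hs]
      refine Finset.sum_congr rfl (fun k hk => ?_)
      rw [← Polynomial.C_mul_X_pow_eq_monomial, mul_assoc, Iw_Cmul]
    have hFeq : ∀ (s : ℝ), 0 < s → F s = Iw ν (P (m+1) s * Q) s := by
      intro s hs
      rw [hF_def]
      conv_rhs => rw [hPsum s hs]
      rw [hprod ν s hs]
      exact Finset.sum_congr rfl (fun k _ => by rw [hGq k s hs])
    have hFzero : ∀ (s : ℝ), 0 < s → F s = 0 := by
      intro s hs
      rw [hFeq s hs, mul_comm]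
      exact Okey s hs m (m+1) Q hQc (fun j hj => hQc j (by omega))
    set D := ∑ k ∈ Finset.range (m+2), (ck' k * G k t + (P (m+1) t).coeff k
      * (Q.sum fun j c => c * -(Mo ((ν-1)+(k+j)) t))) with hD_def
    have hFd : HasDerivAt F D t := by
      rw [hF_def, hD_def]
      exact HasDerivAt.fun_sum fun k _ => (hck k).mul (hGd k)
    have hD0 : D = 0 := by
      have hev : F =ᶠ[𝓝 t] (fun _ => (0:ℝ)) := by
        filter_upwards [Ioi_mem_nhds ht] with s hs
        exact hFzero s hs
      have h2 : HasDerivAt (fun _ : ℝ => (0:ℝ)) D t := hFd.congr_of_eventuallyEq hev.symm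
      simpa using h2.unique (hasDerivAt_const t 0)
    set Pdot := ∑ k ∈ Finset.range (m+2), Polynomial.monomial k (ck' k) with hPdot_def
    have hpart1 : ∑ k ∈ Finset.range (m+2), ck' k * G k t = Iw ν (Pdot * Q) t := by
      rw [hPdot_def, hprod ν t ht ck']
      exact Finset.sum_congr rfl (fun k _ => by rw [hGq k t ht])
    have hpart2 : ∑ k ∈ Finset.range (m+2), (P (m+1) t).coeff k
        * (Q.sum fun j c => c * -(Mo ((ν-1)+(k+j)) t))
        = - Iw (ν-1) (P (m+1) t * Q) t := by
      have hexp : Iw (ν-1) (P (m+1) t * Q) t = ∑ k ∈ Finset.range (m+2),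
          (P (m+1) t).coeff k * Iw (ν-1) (Polynomial.X ^ k * Q) t := by
        conv_lhs => rw [hPsum t ht]
        exact hprod (ν-1) t ht _
      rw [hexp, ← Finset.sum_neg_distrib]
      refine Finset.sum_congr rfl (fun k _ => ?_)
      rw [Iw_Xk_mul (ν-1) k Q ht]
      simp only [Polynomial.sum_def, mul_neg, Finset.sum_neg_distrib]
    have hDsum : D = Iw ν (Pdot * Q) t - Iw (ν-1) (P (m+1) t * Q) t := by
      rw [hD_def, Finset.sum_add_distrib, hpart1, hpart2]
      ring
    have hreq : r = Iw ν (Pdot * Q) t := by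
      rw [hDsum] at hD0
      rw [hr_def]
      linarith
    have hPdotc : ∀ j, Pdot.coeff j = if j ≤ m+1 then ck' j else 0 := by
      intro j
      rw [hPdot_def, Polynomial.finset_sum_coeff]
      simp only [Polynomial.coeff_monomial]
      rw [Finset.sum_ite_eq' (Finset.range (m+2)) j ck']
      simp only [Finset.mem_range]
      congr 1
      simp only [eq_iff_iff]
      omega
    have hval : Iw ν (Pdot * Q) t
        = (ck' m - ck' (m+1) * b (m+1) t / a (m+1) t) / a m t := by
      rw [hQ_def]
      rw [Oeval2 t ht m Pdot (fun j hj => by rw [hPdotc j, if_neg (by omega)])]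
      rw [hPdotc m, if_pos (by omega), hPdotc (m+1), if_pos (le_refl _)]
    rw [hreq, hval, hck'_def]
  -- final computation
  have hev : (fun s => b (m+1) s / a (m+1) s) =ᶠ[𝓝 t]
      (fun s => (P (m+1) s).coeff m / (P (m+1) s).coeff (m+1)) := by
    filter_upwards [Ioi_mem_nhds ht] with s hs
    rw [hbs m s hs, ha (m+1) s hs]
  rw [hev.deriv_eq]
  have hcm : HasDerivAt (fun s => (P (m+1) s).coeff m)
      (deriv (fun s => (P (m+1) s).coeff m) t) t :=
    ((hdiff m).differentiableAt (Ioi_mem_nhds ht)).hasDerivAt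
  have hcm1 : HasDerivAt (fun s => (P (m+1) s).coeff (m+1))
      (deriv (fun s => (P (m+1) s).coeff (m+1)) t) t :=
    ((hdiff (m+1)).differentiableAt (Ioi_mem_nhds ht)).hasDerivAt
  have hne : (P (m+1) t).coeff (m+1) ≠ 0 := by rw [← ha (m+1) t ht]; exact haN
  rw [(hcm.fun_div hcm1 hne).deriv]
  rw [← ha (m+1) t ht, ← hbs m t ht, ← haN_def, ← hbN_def, hA m t ht, ← haN_def, ← haM_def]
  set db := deriv (fun s => (P (m+1) s).coeff m) t with hdb_def
  set da := deriv (fun s => (P (m+1) s).coeff (m+1)) t with hda_def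
  have hrt : r = (aM/aN + bN/aM) / t := by
    field_simp at hibp ⊢
    linarith
  calc (db * aN - bN * da) / aN ^ 2
      = ((db - da * bN / aN) / aM) * (aM / aN) := by field_simp
    _ = r * (aM / aN) := by rw [← hr2]
    _ = 1/t * ((aM/aN)^2 + bN/aN) := by rw [hrt]; field_simp
end

section
/- Let ν ∈ ℝ, t > 0 and n ≥ 0. Then A_{n+1}(t)² + B_n(t)² + A_n(t)² − (2n + ν + 2)·B_n(t) + 2·b_n(t)/a_n(t) − t = 0. -/
section AuxInt
open MeasureTheory Set Filter Real

theorem aux_pow_le_exp (y : ℝ) (hy : 0 ≤ y) (m : ℕ) : y ^ m / m.factorial ≤ Real.exp y := by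
  refine le_trans ?_ (Real.sum_le_exp_of_nonneg hy (m + 1))
  exact Finset.single_le_sum (f := fun i => y ^ i / (i.factorial : ℝ))
    (fun i _ => by positivity) (Finset.self_mem_range_succ m)

theorem aux_meas (s t : ℝ) :
    Measurable (fun x : ℝ => x ^ s * Real.exp (-x - t / x)) := by
  exact (measurable_id.pow_const s).mul
    (((measurable_id.neg).sub ((measurable_const.div measurable_id))).exp)

theorem aux_int (s t : ℝ) (ht : 0 < t) :
    IntegrableOn (fun x : ℝ => x ^ s * Real.exp (-x - t / x)) (Set.Ioi 0) := by
  have hmeas := aux_meas s t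
  rw [show Set.Ioi (0:ℝ) = Set.Ioc 0 1 ∪ Set.Ioi 1 by
    rw [Set.Ioc_union_Ioi_eq_Ioi]; norm_num]
  apply IntegrableOn.union
  · -- bounded on Ioc 0 1
    obtain ⟨m, hm⟩ : ∃ m : ℕ, 0 ≤ s + m := ⟨⌈-s⌉₊, by
      have := Nat.le_ceil (-s); linarith [Nat.le_ceil (-s)]⟩
    apply Measure.integrableOn_of_bounded (M := m.factorial / t ^ m)
      (measure_Ioc_lt_top.ne) (hmeas.aestronglyMeasurable)
    filter_upwards [ae_restrict_mem measurableSet_Ioc] with x hx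
    obtain ⟨hx0, hx1⟩ := hx
    have hxs : (0:ℝ) < x := hx0
    have h1 : Real.exp (-x - t / x) ≤ Real.exp (- (t/x)) := by
      apply Real.exp_le_exp.2; nlinarith
    have h2 : Real.exp (-(t/x)) ≤ m.factorial * x ^ m / t ^ m := by
      rw [Real.exp_neg]
      rw [inv_le_iff_one_le_mul₀ (Real.exp_pos _)]
      have := aux_pow_le_exp (t/x) (by positivity) m
      have h3 : (0:ℝ) < m.factorial * x ^ m / t ^ m := by positivity
      calc (1:ℝ) = ((t/x)^m / m.factorial) * (m.factorial * x ^ m / t ^ m) := by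
            rw [div_pow]; field_simp
        _ ≤ Real.exp (t/x) * (m.factorial * x ^ m / t ^ m) :=
            mul_le_mul_of_nonneg_right this (le_of_lt h3)
        _ = (m.factorial * x ^ m / t ^ m) * Real.exp (t/x) := mul_comm _ _
    rw [norm_mul, Real.norm_eq_abs, Real.norm_eq_abs,
      abs_of_nonneg (Real.rpow_nonneg hxs.le s), abs_of_nonneg (Real.exp_pos _).le]
    calc x ^ s * Real.exp (-x - t/x) ≤ x ^ s * (m.factorial * x ^ m / t ^ m) :=
          mul_le_mul_of_nonneg_left (h1.trans h2) (Real.rpow_nonneg hxs.le s)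
      _ = (x ^ (s + m)) * (m.factorial / t ^ m) := by
          rw [Real.rpow_add hxs, Real.rpow_natCast]; ring
      _ ≤ 1 * (m.factorial / t ^ m) := by
          apply mul_le_mul_of_nonneg_right _ (by positivity)
          exact Real.rpow_le_one hxs.le hx1 hm
      _ = m.factorial / t ^ m := one_mul _
  · -- on Ioi 1
    obtain ⟨m, hm⟩ : ∃ m : ℕ, s - m < -1 := ⟨⌈s⌉₊ + 2, by
      have := Nat.le_ceil s; push_cast; linarith⟩
    have hint : IntegrableOn (fun x : ℝ => (m.factorial : ℝ) * x ^ (s - m)) (Set.Ioi 1) :=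
      IntegrableOn.congr_fun ((integrableOn_Ioi_rpow_of_lt hm one_pos).smul (m.factorial : ℝ))
        (fun x _ => by simp [smul_eq_mul]) measurableSet_Ioi
    apply Integrable.mono' hint hmeas.aestronglyMeasurable
    filter_upwards [ae_restrict_mem measurableSet_Ioi] with x hx
    have hx1 : (1:ℝ) < x := hx
    have hx0 : (0:ℝ) < x := lt_trans one_pos hx1
    rw [norm_mul, Real.norm_eq_abs, Real.norm_eq_abs,
      abs_of_nonneg (Real.rpow_nonneg hx0.le s), abs_of_nonneg (Real.exp_pos _).le]
    have h1 : Real.exp (-x - t / x) ≤ Real.exp (-x) := by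
      apply Real.exp_le_exp.2
      have : 0 < t / x := by positivity
      linarith
    have h2 : Real.exp (-x) ≤ m.factorial / x ^ m := by
      rw [Real.exp_neg, inv_le_iff_one_le_mul₀ (Real.exp_pos _)]
      have := aux_pow_le_exp x hx0.le m
      have h3 : (0:ℝ) < (m.factorial : ℝ) / x ^ m := by positivity
      calc (1:ℝ) = (x^m / m.factorial) * (m.factorial / x ^ m) := by field_simp
        _ ≤ Real.exp x * (m.factorial / x ^ m) := mul_le_mul_of_nonneg_right this h3.le
        _ = (m.factorial / x ^ m) * Real.exp x := mul_comm _ _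
    calc x ^ s * Real.exp (-x - t/x) ≤ x ^ s * (m.factorial / x ^ m) :=
          mul_le_mul_of_nonneg_left (h1.trans h2) (Real.rpow_nonneg hx0.le s)
      _ = m.factorial * x ^ (s - m) := by
          rw [Real.rpow_sub hx0, Real.rpow_natCast]; ring

end AuxInt
open Polynomial
namespace SEq
variable (L : Polynomial ℝ →ₗ[ℝ] ℝ) (P : ℕ → Polynomial ℝ)

theorem L_Cmul (c : ℝ) (Q : Polynomial ℝ) : L (C c * Q) = c * L Q := by
  rw [← smul_eq_C_mul, map_smul, smul_eq_mul]

variable (hdeg : ∀ n, (P n).degree = n)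
variable (horth : ∀ n m, L (P n * P m) = if n = m then 1 else 0)

section
include hdeg

theorem Pne (n : ℕ) : P n ≠ 0 := by
  intro h; have := hdeg n; rw [h, degree_zero] at this; exact absurd this (by simp)

theorem PnatDeg (n : ℕ) : (P n).natDegree = n := natDegree_eq_of_degree_eq_some (hdeg n)

theorem Plead (n : ℕ) : (P n).coeff n ≠ 0 := by
  have h := Pne P hdeg n
  have := mt leadingCoeff_eq_zero.mp h
  rwa [leadingCoeff, PnatDeg P hdeg] at this

include horth

theorem span_aux : ∀ (d : ℕ) (m : ℕ) (Q : Polynomial ℝ), Q.natDegree ≤ d → Q.degree < (m : ℕ) →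
    L (Q * P m) = 0 := by
  intro d
  induction d with
  | zero =>
    intro m Q hQd hQm
    rcases eq_or_ne Q 0 with rfl | hQ0
    · simp
    · have hm : 0 < m := by
        by_contra h
        push_neg at h
        interval_cases m
        exact absurd hQm (by simp [degree_eq_natDegree hQ0, Nat.le_zero.mp hQd])
      have hQC : Q = C (Q.coeff 0) := eq_C_of_natDegree_eq_zero (Nat.le_zero.mp hQd)
      have hP0 : P 0 = C ((P 0).coeff 0) := eq_C_of_natDegree_eq_zero (PnatDeg P hdeg 0)
      have ha0 : (P 0).coeff 0 ≠ 0 := Plead P hdeg 0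
      have hQ2 : Q = C (Q.coeff 0 / (P 0).coeff 0) * P 0 := by
        nth_rewrite 2 [hP0]
        rw [← C_mul, div_mul_cancel₀ _ ha0, ← hQC]
      rw [hQ2, mul_assoc, L_Cmul, horth 0 m, if_neg (by omega), mul_zero]
  | succ d ih =>
    intro m Q hQd hQm
    rcases eq_or_ne Q 0 with rfl | hQ0
    · simp
    by_cases h : Q.natDegree ≤ d
    · exact ih m Q h hQm
    have he : Q.natDegree = d + 1 := le_antisymm hQd (by omega)
    set e := d + 1 with hedef
    have hem : (e : ℕ) < m := by
      have := hQm
      rw [degree_eq_natDegree hQ0, he] at this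
      exact_mod_cast this
    set c : ℝ := Q.coeff e / (P e).coeff e with hc
    have hc0 : c ≠ 0 := by
      apply div_ne_zero _ (Plead P hdeg e)
      rw [← he]; exact mt leadingCoeff_eq_zero.mp hQ0
    set R : Polynomial ℝ := Q - C c * P e with hR
    have hdegR : R.degree < Q.degree := by
      apply degree_sub_lt
      · rw [degree_C_mul hc0, hdeg e, degree_eq_natDegree hQ0, he]
      · exact hQ0
      · rw [leadingCoeff, leadingCoeff_mul, leadingCoeff_C, leadingCoeff, PnatDeg P hdeg,
          he, hc, div_mul_cancel₀ _ (Plead P hdeg e)]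
    have hRd : R.natDegree ≤ d := by
      rcases eq_or_ne R 0 with h0 | h0
      · simp [h0]
      · have := (degree_eq_natDegree h0) ▸ hdegR
        rw [degree_eq_natDegree hQ0, he] at this
        exact_mod_cast Nat.lt_succ_iff.mp (by exact_mod_cast this)
    have hRm : R.degree < (m : ℕ) :=
      lt_trans hdegR (by rw [degree_eq_natDegree hQ0, he]; exact_mod_cast hem)
    have hQeq : Q = C c * P e + R := by rw [hR]; ring
    rw [hQeq, add_mul, map_add, mul_assoc, L_Cmul, horth e m, ih m R hRd hRm]
    simp [hem.ne]

theorem span (m : ℕ) (Q : Polynomial ℝ) (hQm : Q.degree < (m : ℕ)) : L (Q * P m) = 0 :=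
  span_aux L P hdeg horth Q.natDegree m Q le_rfl hQm

theorem master (m : ℕ) (Q : Polynomial ℝ) (hQm : Q.degree ≤ ((m : ℕ) + 1 : ℕ)) :
    L (Q * P m) = (Q.coeff m - Q.coeff (m + 1) / (P (m + 1)).coeff (m + 1) * (P (m + 1)).coeff m)
      / (P m).coeff m := by
  set c1 : ℝ := Q.coeff (m + 1) / (P (m + 1)).coeff (m + 1) with hc1
  set Q1 : Polynomial ℝ := Q - C c1 * P (m + 1) with hQ1
  have hQ1deg : Q1.degree ≤ (m : ℕ) := by
    refine degree_le_iff_coeff_zero _ _ |>.mpr fun k hk => ?_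
    rw [Nat.cast_lt] at hk
    rcases eq_or_lt_of_le (Nat.succ_le_of_lt hk) with h | h
    · simp only [hQ1, coeff_sub, coeff_C_mul, ← h, hc1]
      rw [div_mul_cancel₀ _ (Plead P hdeg (m + 1)), sub_self]
    · have h1 : Q.coeff k = 0 := coeff_eq_zero_of_degree_lt (lt_of_le_of_lt hQm (by exact_mod_cast h))
      have h2 : (P (m + 1)).coeff k = 0 := coeff_eq_zero_of_degree_lt (by rw [hdeg]; exact_mod_cast h)
      simp [hQ1, h1, h2]
  set c2 : ℝ := Q1.coeff m / (P m).coeff m with hc2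
  set Q2 : Polynomial ℝ := Q1 - C c2 * P m with hQ2
  have hQ2deg : Q2.degree < (m : ℕ) := by
    refine degree_lt_iff_coeff_zero _ _ |>.mpr fun k hk => ?_
    rcases eq_or_lt_of_le hk with h | h
    · simp only [hQ2, coeff_sub, coeff_C_mul, ← h, hc2]
      rw [div_mul_cancel₀ _ (Plead P hdeg m), sub_self]
    · have h1 : Q1.coeff k = 0 := coeff_eq_zero_of_degree_lt (lt_of_le_of_lt hQ1deg (by exact_mod_cast h))
      have h2 : (P m).coeff k = 0 := coeff_eq_zero_of_degree_lt (by rw [hdeg]; exact_mod_cast h)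
      simp [hQ2, h1, h2]
  have hQeq : Q = C c1 * P (m + 1) + C c2 * P m + Q2 := by rw [hQ2, hQ1]; ring
  have hQ1c : Q1.coeff m = Q.coeff m - c1 * (P (m + 1)).coeff m := by
    simp [hQ1]
  have key : L (Q * P m) = c2 := by
    rw [hQeq, add_mul, add_mul, map_add, map_add, mul_assoc, mul_assoc, L_Cmul, L_Cmul,
      horth (m + 1) m, horth m m, span L P hdeg horth m Q2 hQ2deg,
      if_pos rfl, if_neg (by omega : ¬ m + 1 = m)]
    ring
  rw [key, hc2, hQ1c, hc1]

theorem orth_zero (Q : Polynomial ℝ) (hQ : ∀ k, L (Q * P k) = 0) : Q = 0 := by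
  by_contra hQ0
  set d := Q.natDegree with hd
  set c : ℝ := Q.coeff d / (P d).coeff d with hc
  have hc0 : c ≠ 0 := div_ne_zero (mt leadingCoeff_eq_zero.mp hQ0) (Plead P hdeg d)
  set R : Polynomial ℝ := Q - C c * P d with hR
  have hdegR : R.degree < Q.degree := by
    apply degree_sub_lt
    · rw [degree_C_mul hc0, hdeg d, degree_eq_natDegree hQ0]
    · exact hQ0
    · rw [leadingCoeff, leadingCoeff_mul, leadingCoeff_C, leadingCoeff, PnatDeg P hdeg,
        hc, div_mul_cancel₀ _ (Plead P hdeg d)]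
  have hRm : R.degree < (d : ℕ) := by
    rw [degree_eq_natDegree hQ0] at hdegR; exact hdegR
  have hQeq : Q = C c * P d + R := by rw [hR]; ring
  have := hQ d
  rw [hQeq, add_mul, map_add, mul_assoc, L_Cmul, horth d d, span L P hdeg horth d R hRm] at this
  simp at this
  exact hc0 this

end
end SEq

namespace SEq
open Polynomial
set_option linter.unusedSectionVars false
section Rec
variable (L : Polynomial ℝ →ₗ[ℝ] ℝ) (P : ℕ → Polynomial ℝ)
variable {a b A B : ℕ → ℝ}
variable (hdeg : ∀ n, (P n).degree = n)
variable (horth : ∀ n m, L (P n * P m) = if n = m then 1 else 0)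
variable (ha : ∀ n, a n = (P n).coeff n)
variable (hb : ∀ n, b (n + 1) = (P (n + 1)).coeff n)
variable (hb0 : b 0 = 0)
variable (hA0 : A 0 = 0)
variable (hA : ∀ n, A (n + 1) = a n / a (n + 1))
variable (hB : ∀ n, B n = b n / a n - b (n + 1) / a (n + 1))

include hdeg ha in
theorem han (n : ℕ) : a n ≠ 0 := by rw [ha]; exact Plead P hdeg n

include hdeg in
theorem degXP (n : ℕ) : (X * P n).degree = ((n + 1 : ℕ) : WithBot ℕ) := by
  rw [degree_mul, degree_X, hdeg]
  exact_mod_cast (by omega : 1 + n = n + 1)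

include hb hb0 in
theorem coeffXP (n : ℕ) : (X * P n).coeff n = b n := by
  cases n with
  | zero => rw [hb0, mul_comm, coeff_mul_X_zero]
  | succ k => rw [coeff_X_mul, hb]

include hdeg horth ha hA in
theorem xv1 (n : ℕ) : L ((X * P n) * P (n + 1)) = A (n + 1) := by
  rw [master L P hdeg horth (n + 1) (X * P n)
    (by rw [degXP P hdeg]; exact_mod_cast (by omega : n + 1 ≤ n + 1 + 1))]
  have h1 : (X * P n).coeff (n + 1) = (P n).coeff n := coeff_X_mul _ _
  have h2 : (X * P n).coeff (n + 2) = 0 := by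
    rw [coeff_X_mul]
    exact coeff_eq_zero_of_degree_lt (by rw [hdeg]; exact_mod_cast (by omega : n < n + 1))
  rw [h1, h2, hA, ha n, ha (n + 1)]
  simp

include hdeg horth ha hb hb0 hB in
theorem xv2 (n : ℕ) : L ((X * P n) * P n) = B n := by
  rw [master L P hdeg horth n (X * P n) (le_of_eq (degXP P hdeg n))]
  rw [coeffXP P hb hb0 n, coeff_X_mul, hB, ← ha n, ← ha (n+1), ← hb n]
  have h1 : a n ≠ 0 := han P hdeg ha n
  have h2 : a (n + 1) ≠ 0 := han P hdeg ha (n + 1)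
  field_simp

include hdeg horth in
theorem xv0 (n m : ℕ) (h : n + 2 ≤ m) : L ((X * P n) * P m) = 0 :=
  span L P hdeg horth m _ (by rw [degXP P hdeg]; exact_mod_cast (by omega : n + 1 < m))

include hdeg horth in
theorem xv0' (n m : ℕ) (h : m + 2 ≤ n) : L ((X * P n) * P m) = 0 := by
  rw [show (X * P n) * P m = (X * P m) * P n by ring]
  exact xv0 L P hdeg horth m n h

include hdeg horth ha hA in
theorem xv3 (n : ℕ) : L ((X * P (n + 1)) * P n) = A (n + 1) := by
  rw [show (X * P (n + 1)) * P n = (X * P n) * P (n + 1) by ring]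
  exact xv1 L P hdeg horth ha hA n

include hdeg horth ha hb hb0 hA0 hA hB in
theorem recur (n : ℕ) :
    (X : Polynomial ℝ) * P n
      = C (A (n + 1)) * P (n + 1) + C (B n) * P n + C (A n) * P (n - 1) := by
  rw [← sub_eq_zero]
  apply orth_zero L P hdeg horth
  intro k
  have hexp : ((X : Polynomial ℝ) * P n
      - (C (A (n + 1)) * P (n + 1) + C (B n) * P n + C (A n) * P (n - 1))) * P k
      = (X * P n) * P k - (C (A (n + 1)) * (P (n + 1) * P k)
        + C (B n) * (P n * P k) + C (A n) * (P (n - 1) * P k)) := by ring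
  rw [hexp, map_sub, map_add, map_add, L_Cmul, L_Cmul, L_Cmul, horth, horth, horth]
  cases n with
  | zero =>
    rcases (by omega : k = 0 ∨ k = 1 ∨ 0 + 2 ≤ k) with rfl | rfl | hk
    · rw [xv2 L P hdeg horth ha hb hb0 hB 0]
      simp [hA0]
    · rw [xv1 L P hdeg horth ha hA 0]
      simp
    · rw [xv0 L P hdeg horth 0 k hk]
      have h1 : ¬ ((0:ℕ) = k) := by omega
      have h2 : ¬ ((1:ℕ) = k) := by omega
      simp [h1, h2, hA0]
  | succ j =>
    rcases (by omega : k = j + 2 ∨ k = j + 1 ∨ k = j ∨ k + 2 ≤ j + 1 ∨ j + 1 + 2 ≤ k)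
      with rfl | rfl | rfl | hk | hk
    · rw [xv1 L P hdeg horth ha hA (j + 1)]
      have h2 : ¬ (j + 1 = j + 2) := by omega
      have h3 : ¬ (j = j + 2) := by omega
      simp [h2, h3]
    · rw [xv2 L P hdeg horth ha hb hb0 hB (j + 1)]
      have h1 : ¬ (j + 2 = j + 1) := by omega
      have h2 : ¬ (j = j + 1) := by omega
      simp [h1, h2]
    · rw [show k + 1 - 1 = k from rfl, xv3 L P hdeg horth ha hA k]
      have h1 : ¬ (k + 2 = k) := by omega
      have h2 : ¬ (k + 1 = k) := by omega
      simp [h1, h2]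
    · rw [xv0' L P hdeg horth (j + 1) k (by omega)]
      have h1 : ¬ (j + 2 = k) := by omega
      have h2 : ¬ (j + 1 = k) := by omega
      have h3 : ¬ (j = k) := by omega
      simp [h1, h2, h3]
    · rw [xv0 L P hdeg horth (j + 1) k (by omega)]
      have h1 : ¬ (j + 2 = k) := by omega
      have h2 : ¬ (j + 1 = k) := by omega
      have h3 : ¬ (j = k) := by omega
      simp [h1, h2, h3]

end Rec
end SEq

namespace SEq
open Polynomial
section Rec2
variable (L : Polynomial ℝ →ₗ[ℝ] ℝ) (P : ℕ → Polynomial ℝ)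
variable {a b A B : ℕ → ℝ}
variable (hdeg : ∀ n, (P n).degree = n)
variable (horth : ∀ n m, L (P n * P m) = if n = m then 1 else 0)
variable (ha : ∀ n, a n = (P n).coeff n)
variable (hb : ∀ n, b (n + 1) = (P (n + 1)).coeff n)
variable (hb0 : b 0 = 0)
variable (hA0 : A 0 = 0)
variable (hA : ∀ n, A (n + 1) = a n / a (n + 1))
variable (hB : ∀ n, B n = b n / a n - b (n + 1) / a (n + 1))

theorem exp3 (α β γ : ℝ) (p1 p2 p3 : Polynomial ℝ) :
    (C α * p1 + C β * p2 + C γ * p3) * (C α * p1 + C β * p2 + C γ * p3)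
    = C (α*α) * (p1*p1) + C (α*β) * (p1*p2) + C (α*γ) * (p1*p3)
    + C (β*α) * (p2*p1) + C (β*β) * (p2*p2) + C (β*γ) * (p2*p3)
    + C (γ*α) * (p3*p1) + C (γ*β) * (p3*p2) + C (γ*γ) * (p3*p3) := by
  simp only [C_mul]; ring

include hdeg horth ha hb hb0 hA0 hA hB in
theorem val_x2 (n : ℕ) :
    L ((X * P n) * (X * P n)) = A (n+1)^2 + B n^2 + A n^2 := by
  rw [recur L P hdeg horth ha hb hb0 hA0 hA hB n, exp3]
  simp only [map_add, L_Cmul, horth]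
  cases n with
  | zero =>
    norm_num [hA0]
    ring
  | succ j =>
    have e1 : j + 1 - 1 = j := rfl
    have h1 : ¬ (j + 1 + 1 = j + 1) := by omega
    have h2 : ¬ (j + 1 + 1 = j) := by omega
    have h3 : ¬ (j + 1 = j + 1 + 1) := by omega
    have h4 : ¬ (j + 1 = j) := by omega
    have h5 : ¬ (j = j + 1 + 1) := by omega
    have h6 : ¬ (j = j + 1) := by omega
    rw [e1]
    simp only [if_pos rfl, if_neg h1, if_neg h2, if_neg h3, if_neg h4, if_neg h5, if_neg h6, if_true]
    ring

include hdeg horth ha hb hb0 in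
theorem val_beta (n : ℕ) :
    L ((derivative (P n) * X^2) * P n)
      = ((n:ℝ) - 1) * (b n / a n) - (n:ℝ) * (b (n+1) / a (n+1)) := by
  have han' : ∀ m, a m ≠ 0 := han P hdeg ha
  have hderiv0 : derivative (P 0) = 0 := by
    rw [eq_C_of_natDegree_eq_zero (PnatDeg P hdeg 0), derivative_C]
  have hdegQ : (derivative (P n) * X^2).degree ≤ ((n + 1 : ℕ) : WithBot ℕ) := by
    cases n with
    | zero => rw [hderiv0, zero_mul]; exact bot_le
    | succ k =>
      refine (degree_le_natDegree).trans ?_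
      have h1 : (derivative (P (k+1)) * X^2).natDegree ≤ k + 2 := by
        refine (natDegree_mul_le).trans ?_
        have := natDegree_derivative_le (P (k+1))
        rw [PnatDeg P hdeg] at this
        simp only [natDegree_X_pow]
        omega
      exact_mod_cast h1
  have hc1 : (derivative (P n) * X^2).coeff (n+1) = (n:ℝ) * a n := by
    cases n with
    | zero => rw [hderiv0, zero_mul]; simp
    | succ k =>
      rw [coeff_mul_X_pow', if_pos (by omega : 2 ≤ k + 1 + 1)]
      have : k + 1 + 1 - 2 = k := by omega
      rw [this, coeff_derivative, ha]
      push_cast; ring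
  have hc2 : (derivative (P n) * X^2).coeff n = ((n:ℝ) - 1) * b n := by
    match n with
    | 0 => rw [hderiv0, zero_mul]; simp [hb0]
    | 1 =>
      rw [coeff_mul_X_pow', if_neg (by omega : ¬ 2 ≤ 1)]
      norm_num
    | (k+2) =>
      rw [coeff_mul_X_pow', if_pos (by omega : 2 ≤ k + 2)]
      have : k + 2 - 2 = k := by omega
      rw [this, coeff_derivative, ← hb (k+1)]
      push_cast; ring
  rw [master L P hdeg horth n _ hdegQ, hc1, hc2, ← ha (n+1), ← hb n, ← ha n]
  have h1 := han' n
  have h2 := han' (n+1)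
  field_simp

end Rec2
end SEq

namespace SEq
open MeasureTheory Set Filter Polynomial Topology

noncomputable def Wt (ν t : ℝ) : ℝ → ℝ := fun x => x ^ ν * Real.exp (-x - t / x)

theorem poly_int (ν t : ℝ) (ht : 0 < t) (Q : Polynomial ℝ) :
    IntegrableOn (fun x => Q.eval x * Wt ν t x) (Set.Ioi 0) := by
  have hmono : ∀ k : ℕ, IntegrableOn (fun x : ℝ => x ^ k * Wt ν t x) (Set.Ioi 0) := by
    intro k
    apply (_root_.aux_int (ν + k) t ht).congr_fun ?_ measurableSet_Ioi
    intro x hx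
    have hx0 : (0:ℝ) < x := hx
    show x ^ (ν + (k:ℝ)) * Real.exp (-x - t / x) = x ^ k * (x ^ ν * Real.exp (-x - t / x))
    rw [Real.rpow_add hx0, Real.rpow_natCast]
    ring
  have heq : (fun x => Q.eval x * Wt ν t x)
      = fun x => ∑ k ∈ Finset.range (Q.natDegree + 1), Q.coeff k * (x ^ k * Wt ν t x) := by
    funext x
    rw [eval_eq_sum_range, Finset.sum_mul]
    exact Finset.sum_congr rfl fun k _ => by ring
  rw [heq]
  exact integrable_finset_sum _ fun k _ => (hmono k).const_mul _

noncomputable def WIl (ν t : ℝ) (ht : 0 < t) : Polynomial ℝ →ₗ[ℝ] ℝ where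
  toFun Q := ∫ x in Set.Ioi 0, Q.eval x * Wt ν t x
  map_add' Q1 Q2 := by
    show (∫ x in Set.Ioi 0, (Q1 + Q2).eval x * Wt ν t x) = _
    rw [← integral_add (poly_int ν t ht Q1) (poly_int ν t ht Q2)]
    apply setIntegral_congr_fun measurableSet_Ioi
    intro x _
    simp only [eval_add]; ring
  map_smul' c Q := by
    show (∫ x in Set.Ioi 0, (c • Q).eval x * Wt ν t x) = _
    simp only [eval_smul, smul_eq_mul, RingHom.id_apply]
    rw [← integral_const_mul]
    apply setIntegral_congr_fun measurableSet_Ioi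
    intro x _
    ring

theorem WIl_apply (ν t : ℝ) (ht : 0 < t) (Q : Polynomial ℝ) :
    WIl ν t ht Q = ∫ x in Set.Ioi 0, Q.eval x * Wt ν t x := rfl

theorem ftc_main (ν t : ℝ) (ht : 0 < t) (U : Polynomial ℝ) :
    WIl ν t ht (derivative (X^2 * U) + C ν * (X * U) + (C t - X^2) * U) = 0 := by
  set R := derivative (X^2 * U) + C ν * (X * U) + (C t - X^2) * U with hR
  set f : ℝ → ℝ := fun x => (X^2*U).eval x * Wt ν t x with hf
  set f' : ℝ → ℝ := fun x => R.eval x * Wt ν t x with hf'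
  have hf0 : f 0 = 0 := by simp [hf, Wt]
  have hderiv : ∀ x ∈ Set.Ioi (0:ℝ), HasDerivAt f (f' x) x := by
    intro x hx
    have hx0 : (0:ℝ) < x := hx
    have hrpow : HasDerivAt (fun y : ℝ => y ^ ν) (ν * x ^ (ν-1)) x :=
      Real.hasDerivAt_rpow_const (Or.inl hx0.ne')
    have hinv : HasDerivAt (fun y : ℝ => t / y) (-(t / x^2)) x := by
      have h := (hasDerivAt_inv hx0.ne').const_mul t
      simp only [div_eq_mul_inv]
      exact h.congr_deriv (by ring)
    have hu : HasDerivAt (fun y : ℝ => -y - t / y) (-1 + t / x^2) x := by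
      have h := ((hasDerivAt_id x).neg).sub hinv
      exact h.congr_deriv (by ring)
    have hexp : HasDerivAt (fun y : ℝ => Real.exp (-y - t/y))
        (Real.exp (-x - t/x) * (-1 + t / x^2)) x := hu.exp
    have hW : HasDerivAt (Wt ν t)
        (ν * x ^ (ν-1) * Real.exp (-x - t/x)
          + x ^ ν * (Real.exp (-x - t/x) * (-1 + t / x^2))) x := hrpow.mul hexp
    have hG : HasDerivAt (fun y : ℝ => (X^2*U).eval y) ((derivative (X^2*U)).eval x) x :=
      (X^2*U).hasDerivAt x
    have h := hG.mul hW
    refine HasDerivAt.congr_deriv h ?_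
    have hν1 : x ^ (ν - 1) = x ^ ν / x := by
      rw [Real.rpow_sub hx0, Real.rpow_one]
    simp only [hf', hR, Wt, eval_add, eval_mul, eval_sub, eval_pow, eval_X, eval_C, hν1]
    field_simp
    ring
  have hint : IntegrableOn f' (Set.Ioi 0) := poly_int ν t ht R
  have htop : Tendsto f atTop (𝓝 0) := by
    have l1 : Tendsto (fun x : ℝ => (X^2*U).eval x * Real.exp (-(2⁻¹) * x)) atTop (𝓝 0) := by
      have hcomp := (Polynomial.tendsto_div_exp_atTop ((X^2*U).comp (C 2 * X))).comp
        (Tendsto.const_mul_atTop (by norm_num : (0:ℝ) < 2⁻¹) tendsto_id)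
      apply hcomp.congr
      intro x
      simp only [Function.comp_apply, eval_comp, eval_mul, eval_C, eval_X, id_eq]
      rw [show (2 : ℝ) * (2⁻¹ * x) = x by ring, div_eq_mul_inv, ← Real.exp_neg]
      ring_nf
    have l2 : Tendsto (fun x : ℝ => x ^ ν * Real.exp (-(2⁻¹) * x)) atTop (𝓝 0) :=
      tendsto_rpow_mul_exp_neg_mul_atTop_nhds_zero ν 2⁻¹ (by norm_num)
    have l3 : Tendsto (fun x : ℝ => Real.exp (-(t * x⁻¹))) atTop (𝓝 1) := by
      have h0 : Tendsto (fun x : ℝ => -(t * x⁻¹)) atTop (𝓝 (0:ℝ)) := by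
        have h1 := Filter.Tendsto.const_mul (-t) (tendsto_inv_atTop_zero (𝕜 := ℝ))
        simp only [mul_zero] at h1
        apply h1.congr
        intro x; ring
      have := (Real.continuous_exp.tendsto 0).comp h0
      rw [Real.exp_zero] at this
      exact this
    have htot := (l1.mul l2).mul l3
    rw [show ((0:ℝ) * 0 * 1) = 0 by ring] at htot
    apply htot.congr
    intro x
    show _ = f x
    simp only [hf, Wt]
    rw [show (-x - t/x) = (-(2⁻¹)*x) + ((-(2⁻¹)*x) + (-(t * x⁻¹))) by rw [div_eq_mul_inv]; ring,
      Real.exp_add, Real.exp_add]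
    ring
  have hcont : ContinuousWithinAt f (Set.Ici 0) 0 := by
    rw [show Set.Ici (0:ℝ) = insert 0 (Set.Ioi 0) by rw [Set.Ioi_insert]]
    rw [continuousWithinAt_insert_self]
    unfold ContinuousWithinAt
    rw [hf0]
    have m1 : Tendsto (fun x : ℝ => U.eval x * Real.exp (-x)) (𝓝[>] (0:ℝ))
        (𝓝 (U.eval 0 * Real.exp (-0))) := by
      apply ContinuousAt.continuousWithinAt
      exact (U.continuous.continuousAt.mul
        ((Real.continuous_exp.comp continuous_neg).continuousAt))
    have m2 : Tendsto (fun x : ℝ => x ^ (ν + 2) * Real.exp (-(t * x⁻¹))) (𝓝[>] (0:ℝ)) (𝓝 0) := by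
      have base := tendsto_rpow_mul_exp_neg_mul_atTop_nhds_zero (-(ν+2)) t ht
      have hcomp := base.comp (tendsto_inv_nhdsGT_zero (𝕜 := ℝ))
      apply hcomp.congr'
      filter_upwards [self_mem_nhdsWithin] with x hx
      have hx0 : (0:ℝ) < x := hx
      simp only [Function.comp_apply]
      rw [Real.inv_rpow hx0.le, Real.rpow_neg hx0.le, inv_inv]
      ring_nf
    have htot := m1.mul m2
    rw [show (U.eval 0 * Real.exp (-0)) * 0 = 0 by ring] at htot
    apply htot.congr'
    filter_upwards [self_mem_nhdsWithin] with x hx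
    have hx0 : (0:ℝ) < x := hx
    simp only [hf, Wt, eval_mul, eval_pow, eval_X]
    rw [show (ν + 2 : ℝ) = ν + ((2:ℕ):ℝ) by norm_num, Real.rpow_add hx0, Real.rpow_natCast,
      show (-x - t/x) = (-x) + (-(t * x⁻¹)) by rw [div_eq_mul_inv]; ring, Real.exp_add]
    ring
  have key := integral_Ioi_of_hasDerivAt_of_tendsto hcont hderiv hint htop
  rw [hf0, sub_zero] at key
  exact key

end SEq

open MeasureTheory

theorem stmt_12
    (ν : ℝ)
    (P : ℕ → ℝ → Polynomial ℝ)
    (a b A B : ℕ → ℝ → ℝ)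
    (hdeg : ∀ n : ℕ, ∀ t : ℝ, 0 < t → (P n t).degree = (n : ℕ))
    (ha : ∀ n : ℕ, ∀ t : ℝ, 0 < t → a n t = (P n t).coeff n)
    (han : ∀ n : ℕ, ∀ t : ℝ, 0 < t → a n t ≠ 0)
    (hbs : ∀ n : ℕ, ∀ t : ℝ, 0 < t → b (n + 1) t = (P (n + 1) t).coeff n)
    (hb0 : ∀ t : ℝ, 0 < t → b 0 t = 0)
    (horth : ∀ n m : ℕ, ∀ t : ℝ, 0 < t →
      (∫ x in Set.Ioi (0 : ℝ),
        (P n t).eval x * (P m t).eval x * (x ^ ν * Real.exp (-x - t / x)))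
        = if n = m then 1 else 0)
    (hA0 : ∀ t : ℝ, 0 < t → A 0 t = 0)
    (hA : ∀ n : ℕ, ∀ t : ℝ, 0 < t → A (n + 1) t = a n t / a (n + 1) t)
    (hB : ∀ n : ℕ, ∀ t : ℝ, 0 < t → B n t = b n t / a n t - b (n + 1) t / a (n + 1) t)
    (n : ℕ) (t : ℝ) (ht : 0 < t) :
    (A (n + 1) t) ^ 2 + (B n t) ^ 2 + (A n t) ^ 2
      - (2 * (n : ℝ) + ν + 2) * B n t + 2 * (b n t / a n t) - t = 0 := by
  classical
  set L := SEq.WIl ν t ht with hL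
  set Pt : ℕ → Polynomial ℝ := fun k => P k t with hPt
  have hdeg' : ∀ k, (Pt k).degree = k := fun k => hdeg k t ht
  have horth' : ∀ k m, L (Pt k * Pt m) = if k = m then 1 else 0 := by
    intro k m
    rw [SEq.WIl_apply]
    rw [show (fun x => (Pt k * Pt m).eval x * SEq.Wt ν t x)
      = fun x => (P k t).eval x * (P m t).eval x * (x ^ ν * Real.exp (-x - t / x)) by
        funext x; simp [SEq.Wt, Polynomial.eval_mul, hPt]]
    exact horth k m t ht
  have ha' : ∀ k, a k t = (Pt k).coeff k := fun k => ha k t ht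
  have hb' : ∀ k, b (k + 1) t = (Pt (k + 1)).coeff k := fun k => hbs k t ht
  have hb0' : b 0 t = 0 := hb0 t ht
  have hA0' : A 0 t = 0 := hA0 t ht
  have hA' : ∀ k, A (k + 1) t = a k t / a (k + 1) t := fun k => hA k t ht
  have hB' : ∀ k, B k t = b k t / a k t - b (k + 1) t / a (k + 1) t := fun k => hB k t ht
  set U : Polynomial ℝ := Pt n * Pt n with hU
  have key := SEq.ftc_main ν t ht U
  have harg : Polynomial.derivative (Polynomial.X ^ 2 * U)
      + Polynomial.C ν * (Polynomial.X * U) + (Polynomial.C t - Polynomial.X ^ 2) * U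
      = (Polynomial.C (2:ℝ) * ((Polynomial.X * Pt n) * Pt n)
        + Polynomial.C (2:ℝ) * ((Polynomial.derivative (Pt n) * Polynomial.X ^ 2) * Pt n)
        + Polynomial.C ν * ((Polynomial.X * Pt n) * Pt n)
        + Polynomial.C t * (Pt n * Pt n))
        - (Polynomial.X * Pt n) * (Polynomial.X * Pt n) := by
    rw [hU]
    simp only [Polynomial.derivative_mul, Polynomial.derivative_X_pow, map_ofNat]
    push_cast
    rw [show (Polynomial.C (2:ℝ)) = (2 : Polynomial ℝ) from map_ofNat Polynomial.C 2]
    ring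
  rw [harg, map_sub, map_add, map_add, map_add, SEq.L_Cmul, SEq.L_Cmul, SEq.L_Cmul,
    SEq.L_Cmul] at key
  have hv2 : L ((Polynomial.X * Pt n) * Pt n) = B n t :=
    SEq.xv2 L Pt (a := fun k => a k t) (b := fun k => b k t) (B := fun k => B k t) hdeg' horth' ha' hb' hb0' hB' n
  have hbeta : L ((Polynomial.derivative (Pt n) * Polynomial.X ^ 2) * Pt n)
      = ((n:ℝ) - 1) * (b n t / a n t) - (n:ℝ) * (b (n+1) t / a (n+1) t) :=
    SEq.val_beta L Pt (a := fun k => a k t) (b := fun k => b k t) hdeg' horth' ha' hb' hb0' n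
  have h1 : L (Pt n * Pt n) = 1 := by rw [horth' n n]; simp
  have hx2 : L ((Polynomial.X * Pt n) * (Polynomial.X * Pt n))
      = A (n+1) t ^ 2 + B n t ^ 2 + A n t ^ 2 :=
    SEq.val_x2 L Pt (a := fun k => a k t) (b := fun k => b k t) (A := fun k => A k t) (B := fun k => B k t) hdeg' horth' ha' hb' hb0' hA0' hA' hB' n
  rw [hv2, hbeta, h1, hx2] at key
  linear_combination (-1 : ℝ) * key - 2 * (n : ℝ) * (hB' n)
end

section
/- Let ν > −1, t > 0 and n ∈ ℕ. Then ∫₀^∞ x^{ν+n−1} e^{−x − t/x} L_n^ν(x) dx = ((−1)^n t^n / n!) · ρ_ν(t), where ρ_ν(t) = ∫₀^∞ e^{−x − t/x} x^{ν−1} dx. -/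
open MeasureTheory
open Set Filter Real

lemma exp_neg_le (N : ℕ) {y : ℝ} (hy : 0 < y) :
    Real.exp (-y) ≤ Nat.factorial N / y ^ N := by
  have h1 : y ^ N / Nat.factorial N ≤ Real.exp y := by
    calc y ^ N / Nat.factorial N
        ≤ ∑ i ∈ Finset.range (N+1), y ^ i / Nat.factorial i := by
          apply Finset.single_le_sum (f := fun i => y ^ i / (Nat.factorial i : ℝ))
          · intro i _; positivity
          · exact Finset.self_mem_range_succ N
      _ ≤ Real.exp y := Real.sum_le_exp_of_nonneg hy.le _
  rw [Real.exp_neg, inv_le_comm₀ (Real.exp_pos _) (by positivity)]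
  rw [inv_div]
  exact (div_le_iff₀ (by positivity : (0:ℝ) < Nat.factorial N)).mpr
    ((div_le_iff₀ (by positivity : (0:ℝ) < (Nat.factorial N:ℝ))).mp h1) |>.trans_eq rfl

lemma contOn_aux (μ t : ℝ) :
    ContinuousOn (fun x : ℝ => x ^ μ * Real.exp (-x - t / x)) (Set.Ioi 0) := by
  intro x hx
  have hx0 : (x:ℝ) ≠ 0 := ne_of_gt hx
  apply ContinuousWithinAt.mul
  · exact (Real.continuousAt_rpow_const x μ (Or.inl hx0)).continuousWithinAt
  · apply (Real.continuous_exp.continuousAt.comp_continuousWithinAt)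
    apply ContinuousWithinAt.sub
    · exact (continuous_neg.continuousAt).continuousWithinAt
    · exact (continuousAt_const.div continuousAt_id hx0).continuousWithinAt

lemma integ_aux (μ t : ℝ) (ht : 0 < t) :
    IntegrableOn (fun x : ℝ => x ^ μ * Real.exp (-x - t / x)) (Set.Ioi 0) := by
  have hmeas : ∀ s ⊆ Set.Ioi (0:ℝ), MeasurableSet s → AEStronglyMeasurable (fun x : ℝ => x ^ μ * Real.exp (-x - t / x))
      (volume.restrict s) := fun s hs hms =>
    ((contOn_aux μ t).mono hs).aestronglyMeasurable hms
  rw [show Set.Ioi (0:ℝ) = Set.Ioo 0 1 ∪ Set.Ici 1 by rw [Set.Ioo_union_Ici_eq_Ioi zero_lt_one]]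
  apply IntegrableOn.union
  · -- near 0 : bound by C * x ^ (μ + N)
    set N : ℕ := ⌈-μ⌉₊ + 1 with hN
    have hμN : -1 < μ + N := by
      have : -μ ≤ ⌈-μ⌉₊ := Nat.le_ceil _
      have : (N:ℝ) ≥ -μ + 1 := by push_cast [hN]; linarith
      linarith
    apply Integrable.mono' (g := fun x : ℝ => (Nat.factorial N / t ^ N) * x ^ (μ + N))
    · apply Integrable.const_mul
      rw [show (fun x : ℝ => x ^ (μ + N)) = fun x : ℝ => x ^ (μ + N) from rfl]
      exact (intervalIntegral.integrableOn_Ioo_rpow_iff zero_lt_one).2 hμN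
    · exact hmeas _ (fun x hx => hx.1) measurableSet_Ioo
    · filter_upwards [ae_restrict_mem measurableSet_Ioo] with x hx
      have hx0 : 0 < x := hx.1
      rw [Real.norm_eq_abs, abs_mul, abs_of_nonneg (Real.rpow_nonneg hx0.le μ),
        abs_of_nonneg (Real.exp_nonneg _)]
      have h1 : Real.exp (-x - t/x) ≤ Real.exp (-(t/x)) := by
        apply Real.exp_le_exp.2; linarith [hx0.le]
      have h2 : Real.exp (-(t/x)) ≤ Nat.factorial N / t ^ N * x ^ N := by
        have h3 := exp_neg_le N (div_pos ht hx0)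
        have h4 : (Nat.factorial N : ℝ) / (t/x) ^ N = Nat.factorial N / t ^ N * x ^ N := by
          rw [div_pow]; field_simp
        linarith
      calc x ^ μ * Real.exp (-x - t/x) ≤ x ^ μ * (Nat.factorial N / t ^ N * x ^ N) := by
            apply mul_le_mul_of_nonneg_left (h1.trans h2) (Real.rpow_nonneg hx0.le μ)
        _ = Nat.factorial N / t ^ N * x ^ (μ + N) := by
            rw [Real.rpow_add hx0, Real.rpow_natCast]; ring
  · -- near ∞
    set s : ℝ := max μ 0 + 1 with hs
    have hs0 : 0 < s := by positivity
    apply Integrable.mono' (g := fun x : ℝ => Real.exp (-x) * x ^ (s - 1))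
    · exact (Real.GammaIntegral_convergent hs0).mono_set (fun x hx => Set.mem_Ioi.2 (lt_of_lt_of_le zero_lt_one (Set.mem_Ici.1 hx)))
    · exact hmeas _ (fun x hx => Set.mem_Ioi.2 (lt_of_lt_of_le zero_lt_one (Set.mem_Ici.1 hx))) measurableSet_Ici
    · filter_upwards [ae_restrict_mem measurableSet_Ici] with x hx
      have hx0 : (0:ℝ) < x := lt_of_lt_of_le zero_lt_one hx
      rw [Real.norm_eq_abs, abs_mul, abs_of_nonneg (Real.rpow_nonneg hx0.le μ),
        abs_of_nonneg (Real.exp_nonneg _)]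
      have h1 : x ^ μ ≤ x ^ (s - 1) := by
        apply Real.rpow_le_rpow_of_exponent_le hx
        simp [hs]
      have h2 : Real.exp (-x - t/x) ≤ Real.exp (-x) := by
        apply Real.exp_le_exp.2
        have : 0 < t / x := div_pos ht hx0
        linarith
      calc x ^ μ * Real.exp (-x - t/x) ≤ x ^ (s-1) * Real.exp (-x) :=
            mul_le_mul h1 h2 (Real.exp_nonneg _) (Real.rpow_nonneg hx0.le _)
        _ = Real.exp (-x) * x ^ (s-1) := mul_comm _ _

noncomputable def rho (t μ : ℝ) : ℝ := ∫ x in Set.Ioi (0:ℝ), x ^ (μ - 1) * Real.exp (-x - t / x)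

lemma deriv_aux (μ t : ℝ) {x : ℝ} (hx : 0 < x) :
    HasDerivAt (fun y : ℝ => y ^ μ * Real.exp (-y - t / y))
      (μ * (x ^ (μ-1) * Real.exp (-x - t/x)) - x ^ μ * Real.exp (-x - t/x)
        + t * (x ^ (μ-2) * Real.exp (-x - t/x))) x := by
  have hx0 : x ≠ 0 := ne_of_gt hx
  have h1 : HasDerivAt (fun y : ℝ => y ^ μ) (μ * x ^ (μ - 1)) x :=
    Real.hasDerivAt_rpow_const (Or.inl hx0)
  have h2 : HasDerivAt (fun y : ℝ => -y - t / y) (-1 - t * (-(x^2)⁻¹)) x := by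
    have h := ((hasDerivAt_id x).neg.sub ((hasDerivAt_inv hx0).const_mul t))
    refine h.congr_of_eventuallyEq (Filter.Eventually.of_forall fun y => ?_)
    simp [div_eq_mul_inv]
  have h3 := h1.mul h2.exp
  refine h3.congr_deriv ?_
  have e2 : x ^ (μ-2) = x ^ μ / x ^ (2:ℕ) := by
    rw [← Real.rpow_natCast x 2, ← Real.rpow_sub hx]; norm_num
  rw [e2]
  field_simp
  ring

lemma ftc_zero (μ t : ℝ) (ht : 0 < t) :
    ∫ x in Set.Ioi (0:ℝ),
      (μ * (x ^ (μ-1) * Real.exp (-x - t/x)) - x ^ μ * Real.exp (-x - t/x)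
        + t * (x ^ (μ-2) * Real.exp (-x - t/x))) = 0 := by
  set F : ℝ → ℝ := fun x => if x ≤ 0 then 0 else x ^ μ * Real.exp (-x - t / x) with hF
  have hFpos : ∀ {x : ℝ}, 0 < x → F x = x ^ μ * Real.exp (-x - t / x) := by
    intro x hx; simp [hF, not_le.2 hx]
  have key := integral_Ioi_of_hasDerivAt_of_tendsto (a := (0:ℝ)) (f := F)
    (f' := fun x => μ * (x ^ (μ-1) * Real.exp (-x - t/x)) - x ^ μ * Real.exp (-x - t/x)
        + t * (x ^ (μ-2) * Real.exp (-x - t/x))) (m := 0) ?_ ?_ ?_ ?_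
  · simpa [hF] using key
  · -- continuity at 0 within Ici 0
    have hF0 : F 0 = 0 := by simp [hF]
    rw [ContinuousWithinAt, hF0]
    set N : ℕ := ⌈-μ⌉₊ + 1 with hN
    have hp : (0:ℝ) < μ + N := by
      have h := Nat.le_ceil (-μ)
      push_cast [hN]
      linarith
    have hbound : ∀ᶠ x in nhdsWithin (0:ℝ) (Set.Ici 0),
        ‖F x‖ ≤ (Nat.factorial N / t ^ N) * x ^ (μ + (N:ℝ)) := by
      filter_upwards [self_mem_nhdsWithin] with x hx
      rcases eq_or_lt_of_le (Set.mem_Ici.1 hx) with h | h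
      · simp [hF, ← h, Real.zero_rpow (ne_of_gt hp)]
      · rw [hFpos h, Real.norm_eq_abs, abs_mul, abs_of_nonneg (Real.rpow_nonneg h.le _),
          abs_of_nonneg (Real.exp_nonneg _)]
        have h1 : Real.exp (-x - t/x) ≤ Real.exp (-(t/x)) :=
          Real.exp_le_exp.2 (by linarith [h.le])
        have h2 := exp_neg_le N (div_pos ht h)
        have h4 : (Nat.factorial N : ℝ) / (t/x) ^ N = Nat.factorial N / t ^ N * x ^ (N:ℕ) := by
          rw [div_pow]; field_simp
        calc x ^ μ * Real.exp (-x - t/x) ≤ x ^ μ * (Nat.factorial N / t ^ N * x ^ (N:ℕ)) := by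
              apply mul_le_mul_of_nonneg_left _ (Real.rpow_nonneg h.le μ)
              rw [← h4]; exact h1.trans h2
          _ = Nat.factorial N / t ^ N * x ^ (μ + (N:ℝ)) := by
              rw [Real.rpow_add h, Real.rpow_natCast]; ring
    have hlim : Tendsto (fun x : ℝ => (Nat.factorial N / t ^ N) * x ^ (μ + (N:ℝ)))
        (nhdsWithin (0:ℝ) (Set.Ici 0)) (nhds 0) := by
      have : Tendsto (fun x : ℝ => x ^ (μ + (N:ℝ))) (nhds (0:ℝ)) (nhds 0) := by
        have hc := (Real.continuousAt_rpow_const 0 (μ + N) (Or.inr hp.le))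
        simpa [Real.zero_rpow (ne_of_gt hp)] using hc.tendsto
      simpa using (this.const_mul ((Nat.factorial N : ℝ) / t ^ N)).mono_left nhdsWithin_le_nhds
    have hnn : ∀ᶠ x in nhdsWithin (0:ℝ) (Set.Ici 0), 0 ≤ F x := by
      filter_upwards with x
      by_cases hx : x ≤ 0
      · simp [hF, hx]
      · rw [hFpos (not_le.1 hx)]
        exact mul_nonneg (Real.rpow_nonneg (not_le.1 hx).le _) (Real.exp_nonneg _)
    exact squeeze_zero' hnn (by filter_upwards [hbound] with x hx using (le_abs_self _).trans (by rwa [← Real.norm_eq_abs])) hlim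
  · intro x hx
    apply (deriv_aux μ t hx).congr_of_eventuallyEq
    filter_upwards [eventually_gt_nhds hx] with y hy
    exact hFpos hy
  · exact (((integ_aux (μ-1) t ht).const_mul μ).sub (integ_aux μ t ht)).add
      ((integ_aux (μ-2) t ht).const_mul t)
  · -- tendsto at top
    apply squeeze_zero' (f := F) (g := fun x : ℝ => x ^ μ * Real.exp (-1 * x))
    · filter_upwards [eventually_gt_atTop (0:ℝ)] with x hx
      rw [hFpos hx]; positivity
    · filter_upwards [eventually_gt_atTop (0:ℝ)] with x hx
      rw [hFpos hx]
      apply mul_le_mul_of_nonneg_left _ (Real.rpow_nonneg hx.le μ)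
      apply Real.exp_le_exp.2
      have : 0 < t / x := div_pos ht hx
      linarith
    · exact tendsto_rpow_mul_exp_neg_mul_atTop_nhds_zero μ 1 one_pos

lemma rho_rec (μ t : ℝ) (ht : 0 < t) :
    rho t (μ + 1) = μ * rho t μ + t * rho t (μ - 1) := by
  have key := ftc_zero μ t ht
  have i1 := integ_aux (μ-1) t ht
  have i2 := integ_aux μ t ht
  have i3 := integ_aux (μ-2) t ht
  have e1 : rho t (μ + 1) = ∫ x in Set.Ioi (0:ℝ), x ^ μ * Real.exp (-x - t / x) := by
    unfold rho; norm_num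
  have e3 : rho t (μ - 1) = ∫ x in Set.Ioi (0:ℝ), x ^ (μ-2) * Real.exp (-x - t / x) := by
    have h : μ - 1 - 1 = μ - 2 := by ring
    rw [rho, h]
  have key2 : (μ * rho t μ) - rho t (μ+1) + (t * rho t (μ-1)) = 0 := by
    rw [e1, e3]
    unfold rho
    rw [← integral_const_mul μ, ← integral_const_mul t,
      ← integral_sub (i1.const_mul μ) i2,
      ← integral_add (show Integrable (fun x : ℝ => μ * (x ^ (μ-1) * Real.exp (-x - t/x)) - x ^ μ * Real.exp (-x - t/x)) (volume.restrict (Set.Ioi 0)) from (i1.const_mul μ).sub i2) (i3.const_mul t)]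
    exact key
  linarith

noncomputable def co (ν : ℝ) (n k : ℕ) : ℝ :=
  (-1:ℝ)^k * (Real.Gamma (n + ν + 1) / (Real.Gamma (k + ν + 1) * (Nat.factorial (n - k) : ℝ)))
    / (Nat.factorial k : ℝ)

lemma gamma_pos_aux (ν : ℝ) (hν : -1 < ν) (m : ℕ) : 0 < Real.Gamma (m + ν + 1) := by
  apply Real.Gamma_pos_of_pos
  have : (0:ℝ) ≤ m := Nat.cast_nonneg m
  linarith

lemma F1 (ν : ℝ) (hν : -1 < ν) (n : ℕ) :
    co ν (n+1) 0 = (ν+1)/(n+1) * co (ν+1) n 0 := by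
  have h1 : ((n+1:ℕ):ℝ) + ν + 1 = (n:ℝ) + (ν+1) + 1 := by push_cast; ring
  have h2 : ((0:ℕ):ℝ) + (ν+1) + 1 = (ν+1) + 1 := by push_cast; ring
  have h3 : ((0:ℕ):ℝ) + ν + 1 = ν + 1 := by push_cast; ring
  have hG : Real.Gamma ((ν+1)+1) = (ν+1) * Real.Gamma (ν+1) :=
    Real.Gamma_add_one (by linarith)
  have hGn : Real.Gamma (ν+1) ≠ 0 := (Real.Gamma_pos_of_pos (by linarith)).ne'
  simp only [co, h1, h2, h3, hG, Nat.sub_zero, pow_zero, Nat.factorial_zero, Nat.factorial_succ]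
  have hν1 : ν + 1 ≠ 0 := by linarith
  have hfn : ((Nat.factorial n : ℕ):ℝ) ≠ 0 := Nat.cast_ne_zero.2 (Nat.factorial_ne_zero n)
  have hn1 : ((n:ℝ)+1) ≠ 0 := by positivity
  push_cast
  field_simp

lemma F3 (ν : ℝ) (hν : -1 < ν) (n : ℕ) :
    co ν (n+1) (n+1) = -(1/(n+1)) * co (ν+2) n n := by
  have hGn2 : Real.Gamma ((n:ℝ) + (ν+2) + 1) ≠ 0 := (gamma_pos_aux (ν+2) (by linarith) n).ne'
  have hGn1 : Real.Gamma (((n+1:ℕ):ℝ) + ν + 1) ≠ 0 := (gamma_pos_aux ν hν (n+1)).ne'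
  have hfn : ((Nat.factorial n : ℕ):ℝ) ≠ 0 := Nat.cast_ne_zero.2 (Nat.factorial_ne_zero n)
  have hn1 : ((n:ℝ)+1) ≠ 0 := by positivity
  simp only [co, Nat.sub_self, Nat.factorial_zero, Nat.cast_one, mul_one]
  rw [div_self hGn1, div_self hGn2]
  simp only [Nat.factorial_succ, pow_succ]
  push_cast
  field_simp

lemma F2 (ν : ℝ) (hν : -1 < ν) (n k : ℕ) (hk : k < n) :
    co ν (n+1) (k+1) = (ν+1)/(n+1) * co (ν+1) n (k+1) - (1/(n+1)) * co (ν+2) n k := by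
  have hkν : (0:ℝ) < (k:ℝ) + ν + 2 := by
    have : (0:ℝ) ≤ k := Nat.cast_nonneg k
    linarith
  have hnν : (0:ℝ) < (n:ℝ) + ν + 2 := by
    have : (0:ℝ) ≤ n := Nat.cast_nonneg n
    linarith
  have hB : (0:ℝ) < Real.Gamma ((k:ℝ) + ν + 2) := Real.Gamma_pos_of_pos hkν
  have hA : (0:ℝ) < Real.Gamma ((n:ℝ) + ν + 2) := Real.Gamma_pos_of_pos hnν
  -- rewrite all Gamma arguments
  have e1 : ((n+1:ℕ):ℝ) + ν + 1 = (n:ℝ) + ν + 2 := by push_cast; ring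
  have e2 : ((k+1:ℕ):ℝ) + ν + 1 = (k:ℝ) + ν + 2 := by push_cast; ring
  have e3 : (n:ℝ) + (ν+2) + 1 = ((n:ℝ) + ν + 2) + 1 := by ring
  have e4 : (k:ℝ) + (ν+2) + 1 = ((k:ℝ) + ν + 2) + 1 := by ring
  have e5 : (n:ℝ) + (ν+1) + 1 = (n:ℝ) + ν + 2 := by ring
  have e6 : ((k+1:ℕ):ℝ) + (ν+1) + 1 = ((k:ℝ) + ν + 2) + 1 := by push_cast; ring
  have g3 : Real.Gamma (((n:ℝ) + ν + 2) + 1) = ((n:ℝ)+ν+2) * Real.Gamma ((n:ℝ)+ν+2) :=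
    Real.Gamma_add_one hnν.ne'
  have g4 : Real.Gamma (((k:ℝ) + ν + 2) + 1) = ((k:ℝ)+ν+2) * Real.Gamma ((k:ℝ)+ν+2) :=
    Real.Gamma_add_one hkν.ne'
  -- factorial identities
  have hf1 : (n + 1) - (k + 1) = n - k := by omega
  have hf2 : n - k = (n - (k+1)) + 1 := by omega
  have hfk : ((Nat.factorial k : ℕ):ℝ) ≠ 0 := Nat.cast_ne_zero.2 (Nat.factorial_ne_zero k)
  have hfnk : ((Nat.factorial (n - (k+1)) : ℕ):ℝ) ≠ 0 := Nat.cast_ne_zero.2 (Nat.factorial_ne_zero _)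
  have hn1 : ((n:ℝ)+1) ≠ 0 := by positivity
  have hk1 : ((k:ℝ)+1) ≠ 0 := by positivity
  have hnk1 : ((n:ℝ) - (k:ℝ)) ≠ 0 := by
    have : (k:ℝ) < n := by exact_mod_cast hk
    linarith
  simp only [co, e1, e2, e3, e4, e5, e6, g3, g4, hf1, hf2, Nat.factorial_succ, pow_succ]
  have hcast : ((n - (k+1) + 1 : ℕ):ℝ) = (n:ℝ) - (k:ℝ) := by
    have : n - (k+1) + 1 = n - k := by omega
    rw [this]
    push_cast [Nat.cast_sub hk.le]
    ring
  push_cast [hcast]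
  field_simp
  ring

lemma key_sum (t : ℝ) (ht : 0 < t) :
    ∀ (n : ℕ) (ν : ℝ), -1 < ν →
      ∑ k ∈ Finset.range (n+1), co ν n k * rho t (ν + n + k)
        = (-1:ℝ)^n * t^n / (Nat.factorial n : ℝ) * rho t ν := by
  intro n
  induction n with
  | zero =>
      intro ν hν
      have hG : Real.Gamma (ν + 1) ≠ 0 := by
        have := gamma_pos_aux ν hν 0
        simpa using this.ne'
      simp only [Finset.sum_range_one, co, Nat.sub_self, Nat.factorial_zero, Nat.cast_one,
        mul_one, pow_zero, Nat.cast_zero, zero_add, div_self hG]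
      norm_num
  | succ n IH =>
      intro ν hν
      have IH1 := IH (ν+1) (by linarith)
      have IH2 := IH (ν+2) (by linarith)
      have hr := rho_rec (ν+1) t ht
      have hr1 : ν + 1 + 1 = ν + 2 := by ring
      have hr2 : ν + 1 - 1 = ν := by ring
      rw [hr1, hr2] at hr
      have hgoalL : ∑ k ∈ Finset.range (n+1+1), co ν (n+1) k * rho t (ν + (n+1:ℕ) + k)
          = ∑ k ∈ Finset.range (n+1+1), co ν (n+1) k * rho t (ν + n + 1 + k) :=
        Finset.sum_congr rfl (fun k _ => by
          rw [show ν + ((n+1:ℕ):ℝ) + k = ν + n + 1 + k by push_cast; ring])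
      have hIH1' : ∑ k ∈ Finset.range (n+1), co (ν+1) n k * rho t (ν + n + 1 + k)
          = (-1:ℝ)^n * t^n / (Nat.factorial n : ℝ) * rho t (ν+1) := by
        rw [← IH1]
        exact Finset.sum_congr rfl (fun k _ => by
          rw [show ν + (n:ℝ) + 1 + k = ν + 1 + n + k by ring])
      have hIH2' : ∑ k ∈ Finset.range (n+1), co (ν+2) n k * rho t (ν + n + 1 + (k+1:ℕ))
          = (-1:ℝ)^n * t^n / (Nat.factorial n : ℝ) * rho t (ν+2) := by
        rw [← IH2]
        exact Finset.sum_congr rfl (fun k _ => by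
          rw [show ν + (n:ℝ) + 1 + ((k+1:ℕ):ℝ) = ν + 2 + n + k by push_cast; ring])
      rw [hgoalL]
      have SUMEQ : ∑ k ∈ Finset.range (n+1+1), co ν (n+1) k * rho t (ν + n + 1 + k)
          = (ν+1)/(n+1) * ∑ k ∈ Finset.range (n+1), co (ν+1) n k * rho t (ν + n + 1 + k)
            - (1/(n+1)) * ∑ k ∈ Finset.range (n+1), co (ν+2) n k * rho t (ν + n + 1 + (k+1:ℕ)) := by
        rw [Finset.sum_range_succ' (fun k => co ν (n+1) k * rho t (ν + n + 1 + k)) (n+1)]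
        rw [Finset.sum_range_succ (fun k => co ν (n+1) (k+1) * rho t (ν + n + 1 + ((k+1:ℕ):ℝ))) n]
        rw [Finset.sum_range_succ' (fun k => co (ν+1) n k * rho t (ν + n + 1 + k)) n]
        rw [Finset.sum_range_succ (fun k => co (ν+2) n k * rho t (ν + n + 1 + ((k+1:ℕ):ℝ))) n]
        have hptwise : ∀ k ∈ Finset.range n,
            co ν (n+1) (k+1) * rho t (ν + n + 1 + ((k+1:ℕ):ℝ))
              = (ν+1)/(n+1) * (co (ν+1) n (k+1) * rho t (ν + n + 1 + ((k+1:ℕ):ℝ)))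
                - (1/(n+1)) * (co (ν+2) n k * rho t (ν + n + 1 + ((k+1:ℕ):ℝ))) := by
          intro k hkmem
          rw [F2 ν hν n k (Finset.mem_range.1 hkmem)]
          ring
        rw [Finset.sum_congr rfl hptwise, Finset.sum_sub_distrib, ← Finset.mul_sum,
          ← Finset.mul_sum]
        rw [F1 ν hν n, F3 ν hν n]
        push_cast
        ring
      rw [SUMEQ, hIH1', hIH2']
      have hfact : ((Nat.factorial (n+1) : ℕ):ℝ) = ((n:ℝ)+1) * (Nat.factorial n : ℝ) := by
        rw [Nat.factorial_succ]; push_cast; ring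
      have hfn : ((Nat.factorial n : ℕ):ℝ) ≠ 0 := Nat.cast_ne_zero.2 (Nat.factorial_ne_zero n)
      have hn1 : ((n:ℝ)+1) ≠ 0 := by positivity
      rw [hfact, hr]
      push_cast [pow_succ]
      field_simp
      ring

theorem stmt_18
    (ν : ℝ) (hν : -1 < ν) (t : ℝ) (ht : 0 < t) (n : ℕ) :
    (∫ x in Set.Ioi (0 : ℝ),
        x ^ (ν + (n : ℝ) - 1) * Real.exp (-x - t / x)
          * (∑ k ∈ Finset.range (n + 1),
              (-1 : ℝ) ^ k
                * (Real.Gamma ((n : ℝ) + ν + 1)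
                    / (Real.Gamma ((k : ℝ) + ν + 1) * (Nat.factorial (n - k) : ℝ)))
                * x ^ k / (Nat.factorial k : ℝ)))
      = ((-1 : ℝ) ^ n * t ^ n / (Nat.factorial n : ℝ))
          * ∫ x in Set.Ioi (0 : ℝ), Real.exp (-x - t / x) * x ^ (ν - 1) := by
  have hrw : ∀ x ∈ Set.Ioi (0:ℝ),
      x ^ (ν + (n : ℝ) - 1) * Real.exp (-x - t / x)
          * (∑ k ∈ Finset.range (n + 1),
              (-1 : ℝ) ^ k
                * (Real.Gamma ((n : ℝ) + ν + 1)
                    / (Real.Gamma ((k : ℝ) + ν + 1) * (Nat.factorial (n - k) : ℝ)))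
                * x ^ k / (Nat.factorial k : ℝ))
        = ∑ k ∈ Finset.range (n + 1),
            co ν n k * (x ^ (ν + (n:ℝ) - 1 + k) * Real.exp (-x - t / x)) := by
    intro x hx
    have hx0 : (0:ℝ) < x := hx
    rw [Finset.mul_sum]
    apply Finset.sum_congr rfl
    intro k _
    have hpow : x ^ (ν + (n:ℝ) - 1 + k) = x ^ (ν + (n:ℝ) - 1) * x ^ (k:ℕ) := by
      rw [Real.rpow_add hx0, Real.rpow_natCast]
    rw [hpow, co]
    ring
  rw [setIntegral_congr_fun measurableSet_Ioi hrw]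
  rw [integral_finset_sum _ (fun (k : ℕ) (_ : k ∈ Finset.range (n+1)) =>
    ((integ_aux (ν + (n:ℝ) - 1 + (k:ℝ)) t ht).const_mul (co ν n k)))]
  have hterm : ∀ k ∈ Finset.range (n+1),
      (∫ x in Set.Ioi (0:ℝ), co ν n k * (x ^ (ν + (n:ℝ) - 1 + k) * Real.exp (-x - t / x)))
        = co ν n k * rho t (ν + n + k) := by
    intro k _
    rw [integral_const_mul]
    congr 1
    rw [rho, show ν + (n:ℝ) + k - 1 = ν + (n:ℝ) - 1 + k by ring]
  rw [Finset.sum_congr rfl hterm, key_sum t ht n ν hν]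
  congr 1
  rw [rho]
  exact setIntegral_congr_fun measurableSet_Ioi (fun x hx => mul_comm _ _)
end
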